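/- arXiv:2111.01219 — 9 statements merged into one kernel-verified Lean document; each statement's English description precedes it below -/
import Mathlib

section
/- Let f: R^n_{≥0} → R^n_{≥0} be order-preserving and homogeneous. For every strictly positive x, the lower Collatz-Wielandt number λ(f) equals the limit as k → ∞ of (min_i f^k(x)_i)^{1/k}. -/
/-!
If `c • y ≤ f y` for some `y ≫ 0`, then `f^[k] y ≥ c ^ k • y`, and since `x` dominates a positive
multiple of `y`, `min_i f^[k](x)_i ≥ β c ^ k`; this gives the lower bound for every `c < λ(f)`.
Conversely, if `f^[k] x ≥ t ^ k • x`, the vector `y = max_{j<k} t⁻ʲ • f^[j] x` is strictly positive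
with `f y ≥ t • y`, so `t ≤ λ(f)`; applied with `t ^ k = min_i f^[k](x)_i / max_i x_i` this gives
`min_i f^[k](x)_i ≤ (max_i x_i) λ(f) ^ k`. Taking `k`-th roots squeezes the sequence to `λ(f)`.
-/

open Filter Topology

structure IsOrderPreservingHomogeneous {ι : Type*} (f : (ι → ℝ) → ι → ℝ) : Prop where
  mono : ∀ x y, 0 ≤ x → 0 ≤ y → x ≤ y → f x ≤ f y
  map_smul : ∀ t : ℝ, 0 < t → ∀ x, 0 ≤ x → f (t • x) = t • f x

namespace IsOrderPreservingHomogeneous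

variable {ι : Type*} {f g : (ι → ℝ) → ι → ℝ}

theorem map_zero (hf : IsOrderPreservingHomogeneous f) : f 0 = 0 := by
  have h := hf.map_smul 2 two_pos 0 le_rfl
  rw [smul_zero, two_smul] at h
  simpa using h

theorem nonneg (hf : IsOrderPreservingHomogeneous f) {x : ι → ℝ} (hx : 0 ≤ x) : 0 ≤ f x :=
  hf.map_zero ▸ hf.mono 0 x le_rfl hx hx

theorem comp (hf : IsOrderPreservingHomogeneous f) (hg : IsOrderPreservingHomogeneous g) :
    IsOrderPreservingHomogeneous (f ∘ g) where
  mono x y hx hy hxy := hf.mono _ _ (hg.nonneg hx) (hg.nonneg hy) (hg.mono x y hx hy hxy)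
  map_smul t ht x hx := by
    rw [Function.comp_apply, hg.map_smul t ht x hx, hf.map_smul t ht _ (hg.nonneg hx)]; rfl

theorem iterate (hf : IsOrderPreservingHomogeneous f) (k : ℕ) :
    IsOrderPreservingHomogeneous f^[k] := by
  induction k with
  | zero => exact ⟨fun _ _ _ _ h => h, fun _ _ _ _ => rfl⟩
  | succ k ih => rw [Function.iterate_succ]; exact ih.comp hf

theorem smul_pow_le_iterate (hf : IsOrderPreservingHomogeneous f) {c : ℝ} (hc : 0 < c)
    {y : ι → ℝ} (hy : 0 ≤ y) (h : c • y ≤ f y) (k : ℕ) : c ^ k • y ≤ f^[k] y := by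
  induction k with
  | zero => simp
  | succ k ih =>
    have hcy : 0 ≤ c ^ k • y := smul_nonneg (pow_nonneg hc.le k) hy
    calc c ^ (k + 1) • y = c ^ k • (c • y) := by rw [pow_succ, mul_smul]
      _ ≤ c ^ k • f y := smul_le_smul_of_nonneg_left h (pow_nonneg hc.le k)
      _ = f (c ^ k • y) := (hf.map_smul _ (pow_pos hc k) y hy).symm
      _ ≤ f (f^[k] y) := hf.mono _ _ hcy ((hf.iterate k).nonneg hy) ih
      _ = f^[k + 1] y := (Function.iterate_succ_apply' f k y).symm

theorem exists_smul_le_of_smul_pow_le_iterate (hf : IsOrderPreservingHomogeneous f)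
    {x : ι → ℝ} (hx : ∀ i, 0 < x i) {t : ℝ} (ht : 0 < t) {k : ℕ} (hk : k ≠ 0)
    (h : t ^ k • x ≤ f^[k] x) : ∃ y : ι → ℝ, (∀ i, 0 < y i) ∧ t • y ≤ f y := by
  have hx0 : 0 ≤ x := fun i => (hx i).le
  have hs : 0 < t⁻¹ := inv_pos.2 ht
  have hne : (Finset.range k).Nonempty := Finset.nonempty_range_iff.2 hk
  set y := (Finset.range k).sup' hne fun j => t⁻¹ ^ j • f^[j] x
  have hterm : ∀ j < k, t⁻¹ ^ j • f^[j] x ≤ y := fun j hj =>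
    Finset.le_sup' (fun j => t⁻¹ ^ j • f^[j] x) (Finset.mem_range.2 hj)
  have hxy : x ≤ y := by simpa using hterm 0 (Nat.pos_of_ne_zero hk)
  have hy0 : 0 ≤ y := hx0.trans hxy
  have hstep : ∀ j < k, t⁻¹ ^ j • f^[j + 1] x ≤ f y := fun j hj => by
    have hj0 : 0 ≤ f^[j] x := (hf.iterate j).nonneg hx0
    rw [Function.iterate_succ_apply', ← hf.map_smul _ (pow_pos hs j) _ hj0]
    exact hf.mono _ _ (smul_nonneg (pow_nonneg hs.le j) hj0) hy0 (hterm j hj)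
  refine ⟨y, fun i => (hx i).trans_le (hxy i), ?_⟩
  -- `hstep` bounds the terms `j ≥ 1` of `y` by `t⁻¹ • f y`; the hypothesis bounds the term `j = 0`.
  suffices y ≤ t⁻¹ • f y by
    simpa [smul_smul, ht.ne'] using smul_le_smul_of_nonneg_left this ht.le
  refine Finset.sup'_le hne _ fun j hj => ?_
  rw [Finset.mem_range] at hj
  cases j with
  | zero =>
    obtain ⟨l, rfl⟩ := Nat.exists_eq_add_one_of_ne_zero hk
    calc t⁻¹ ^ 0 • f^[0] x = x := by simp
      _ ≤ t⁻¹ ^ (l + 1) • f^[l + 1] x := by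
        have := smul_le_smul_of_nonneg_left h (pow_nonneg hs.le (l + 1))
        rwa [smul_smul, ← mul_pow, inv_mul_cancel₀ ht.ne', one_pow, one_smul] at this
      _ = t⁻¹ • t⁻¹ ^ l • f^[l + 1] x := by rw [smul_smul, ← pow_succ']
      _ ≤ t⁻¹ • f y := smul_le_smul_of_nonneg_left (hstep l (by omega)) hs.le
  | succ j =>
    calc t⁻¹ ^ (j + 1) • f^[j + 1] x = t⁻¹ • t⁻¹ ^ j • f^[j + 1] x := by
          rw [smul_smul, ← pow_succ']
      _ ≤ t⁻¹ • f y := smul_le_smul_of_nonneg_left (hstep j (by omega)) hs.le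

end IsOrderPreservingHomogeneous

noncomputable def collatzWielandt {ι : Type*} (f : (ι → ℝ) → ι → ℝ) (y : ι → ℝ) : ℝ :=
  ⨅ i, f y i / y i

noncomputable def lowerCollatzWielandt {ι : Type*} (f : (ι → ℝ) → ι → ℝ) : ℝ :=
  ⨆ y : {y : ι → ℝ // ∀ i, 0 < y i}, collatzWielandt f y.1

section CollatzWielandt

variable {ι : Type*} [Finite ι] [Nonempty ι] {f : (ι → ℝ) → ι → ℝ}

theorem le_collatzWielandt_iff {y : ι → ℝ} (hy : ∀ i, 0 < y i) {c : ℝ} :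
    c ≤ collatzWielandt f y ↔ c • y ≤ f y := by
  simp only [collatzWielandt, le_ciInf_iff (Finite.bddBelow_range _), le_div_iff₀ (hy _),
    Pi.le_def, Pi.smul_apply, smul_eq_mul, mul_comm c]

theorem exists_smul_le_and_eq {x y : ι → ℝ} (hx : ∀ i, 0 < x i) (hy : ∀ i, 0 < y i) :
    ∃ α > 0, ∃ i, α • y ≤ x ∧ α * y i = x i := by
  obtain ⟨i, hi⟩ := Finite.exists_min fun i => x i / y i
  refine ⟨x i / y i, div_pos (hx i) (hy i), i, fun j => ?_, div_mul_cancel₀ _ (hy i).ne'⟩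
  simpa only [Pi.smul_apply, smul_eq_mul, ← le_div_iff₀ (hy j)] using hi j

namespace IsOrderPreservingHomogeneous

theorem collatzWielandt_le_iSup (hf : IsOrderPreservingHomogeneous f) {x y : ι → ℝ}
    (hx : ∀ i, 0 < x i) (hy : ∀ i, 0 < y i) :
    collatzWielandt f y ≤ ⨆ i, f x i / x i := by
  obtain ⟨α, hα, i, hαy, hαi⟩ := exists_smul_le_and_eq hx hy
  have hαy0 : 0 ≤ α • y := smul_nonneg hα.le fun j => (hy j).le
  calc collatzWielandt f y ≤ f y i / y i := ciInf_le (Finite.bddBelow_range _) i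
    _ = f (α • y) i / x i := by
      rw [hf.map_smul α hα y fun j => (hy j).le, ← hαi, Pi.smul_apply, smul_eq_mul,
        mul_div_mul_left _ _ hα.ne']
    _ ≤ f x i / x i := div_le_div_of_nonneg_right
      (hf.mono _ _ hαy0 (fun j => (hx j).le) hαy i) (hx i).le
    _ ≤ ⨆ i, f x i / x i := le_ciSup (Finite.bddAbove_range fun i => f x i / x i) i

theorem collatzWielandt_le_lowerCollatzWielandt (hf : IsOrderPreservingHomogeneous f)
    {y : ι → ℝ} (hy : ∀ i, 0 < y i) : collatzWielandt f y ≤ lowerCollatzWielandt f :=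
  le_ciSup (f := fun y : {y : ι → ℝ // ∀ i, 0 < y i} => collatzWielandt f y.1)
    ⟨⨆ i, f 1 i / 1, by
      rintro _ ⟨y, rfl⟩
      exact hf.collatzWielandt_le_iSup (fun _ => one_pos) y.2⟩ ⟨y, hy⟩

theorem lowerCollatzWielandt_nonneg (hf : IsOrderPreservingHomogeneous f) :
    0 ≤ lowerCollatzWielandt f :=
  have h1 : ∀ i, (0 : ℝ) < (1 : ι → ℝ) i := fun _ => one_pos
  ((le_collatzWielandt_iff h1).2 (by simpa using hf.nonneg zero_le_one)).trans
    (hf.collatzWielandt_le_lowerCollatzWielandt h1)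

theorem le_lowerCollatzWielandt_of_smul_pow_le_iterate (hf : IsOrderPreservingHomogeneous f)
    {x : ι → ℝ} (hx : ∀ i, 0 < x i) {t : ℝ} (ht : 0 < t) {k : ℕ} (hk : k ≠ 0)
    (h : t ^ k • x ≤ f^[k] x) : t ≤ lowerCollatzWielandt f := by
  obtain ⟨y, hy, hty⟩ := hf.exists_smul_le_of_smul_pow_le_iterate hx ht hk h
  exact ((le_collatzWielandt_iff hy).2 hty).trans (hf.collatzWielandt_le_lowerCollatzWielandt hy)

theorem iInf_iterate_le (hf : IsOrderPreservingHomogeneous f) {x : ι → ℝ} (hx : ∀ i, 0 < x i)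
    {M : ℝ} (hM : ∀ i, x i ≤ M) {k : ℕ} (hk : k ≠ 0) :
    ⨅ i, f^[k] x i ≤ M * lowerCollatzWielandt f ^ k := by
  have hM0 : 0 < M := (hx (Classical.arbitrary ι)).trans_le (hM _)
  set m := ⨅ i, f^[k] x i
  have hm0 : 0 ≤ m := le_ciInf fun i => (hf.iterate k).nonneg (fun j => (hx j).le) i
  rcases hm0.eq_or_lt with hm | hm
  · rw [← hm]; exact mul_nonneg hM0.le (pow_nonneg hf.lowerCollatzWielandt_nonneg k)
  set t := (m / M) ^ (k⁻¹ : ℝ)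
  have htk : t ^ k = m / M := Real.rpow_inv_natCast_pow (div_pos hm hM0).le hk
  have hsub : t ^ k • x ≤ f^[k] x := fun i => by
    calc (t ^ k • x) i = m / M * x i := by rw [htk]; rfl
      _ ≤ m / M * M := mul_le_mul_of_nonneg_left (hM i) (div_pos hm hM0).le
      _ = m := div_mul_cancel₀ _ hM0.ne'
      _ ≤ f^[k] x i := ciInf_le (Finite.bddBelow_range _) i
  have ht := hf.le_lowerCollatzWielandt_of_smul_pow_le_iterate hx
    (Real.rpow_pos_of_pos (div_pos hm hM0) _) hk hsub
  calc m = M * t ^ k := by rw [htk, mul_div_cancel₀ _ hM0.ne']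
    _ ≤ M * lowerCollatzWielandt f ^ k :=
      mul_le_mul_of_nonneg_left (pow_le_pow_left₀ (Real.rpow_nonneg (div_pos hm hM0).le _) ht k)
        hM0.le

theorem exists_mul_pow_le_iInf_iterate (hf : IsOrderPreservingHomogeneous f) {x y : ι → ℝ}
    (hx : ∀ i, 0 < x i) (hy : ∀ i, 0 < y i) {c : ℝ} (hc : 0 < c) (h : c • y ≤ f y) :
    ∃ β > 0, ∀ k, β * c ^ k ≤ ⨅ i, f^[k] x i := by
  have hy0 : 0 ≤ y := fun i => (hy i).le
  obtain ⟨α, hα, -, hαy, -⟩ := exists_smul_le_and_eq hx hy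
  obtain ⟨γ, hγ, -, hγ1, -⟩ := exists_smul_le_and_eq hy fun _ => one_pos
  refine ⟨α * γ, mul_pos hα hγ, fun k => le_ciInf fun i => ?_⟩
  have hγi : γ ≤ y i := by simpa using hγ1 i
  calc α * γ * c ^ k ≤ α * (c ^ k * y i) := by
        rw [mul_assoc, mul_comm γ]
        exact mul_le_mul_of_nonneg_left (mul_le_mul_of_nonneg_left hγi (pow_nonneg hc.le k)) hα.le
    _ ≤ α * f^[k] y i :=
      mul_le_mul_of_nonneg_left (hf.smul_pow_le_iterate hc hy0 h k i) hα.le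
    _ = f^[k] (α • y) i := by rw [(hf.iterate k).map_smul α hα y hy0]; rfl
    _ ≤ f^[k] x i := (hf.iterate k).mono _ _ (smul_nonneg hα.le hy0) (fun j => (hx j).le) hαy i

theorem exists_mul_pow_le_iInf_iterate_of_lt (hf : IsOrderPreservingHomogeneous f)
    {x : ι → ℝ} (hx : ∀ i, 0 < x i) {c : ℝ} (hc : 0 < c) (hcl : c < lowerCollatzWielandt f) :
    ∃ β > 0, ∀ k, β * c ^ k ≤ ⨅ i, f^[k] x i := by
  have : Nonempty {y : ι → ℝ // ∀ i, 0 < y i} := ⟨⟨x, hx⟩⟩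
  obtain ⟨⟨y, hy⟩, hcy⟩ := exists_lt_of_lt_ciSup hcl
  exact hf.exists_mul_pow_le_iInf_iterate hx hy hc ((le_collatzWielandt_iff hy).1 hcy.le)

end IsOrderPreservingHomogeneous

end CollatzWielandt

theorem tendsto_rpow_one_div_natCast {β : ℝ} (hβ : 0 < β) :
    Tendsto (fun k : ℕ => β ^ ((1 : ℝ) / k)) atTop (𝓝 1) := by
  simpa [Function.comp_def] using (Real.continuousAt_const_rpow hβ.ne').tendsto.comp
    tendsto_one_div_atTop_nhds_zero_nat

theorem tendsto_rpow_one_div_of_pow_bounds {a : ℕ → ℝ} {M l : ℝ} (ha : ∀ k, 0 ≤ a k)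
    (hM : 0 < M) (hl : 0 ≤ l) (hupper : ∀ᶠ k in atTop, a k ≤ M * l ^ k)
    (hlower : ∀ c, 0 < c → c < l → ∃ β > 0, ∀ k, β * c ^ k ≤ a k) :
    Tendsto (fun k : ℕ => a k ^ ((1 : ℝ) / k)) atTop (𝓝 l) := by
  refine tendsto_order.2 ⟨fun c hc => ?_, fun d hd => ?_⟩
  · rcases lt_or_ge c 0 with hc0 | hc0
    · exact Eventually.of_forall fun k => hc0.trans_le (Real.rpow_nonneg (ha k) _)
    obtain ⟨c', hcc', hc'l⟩ := exists_between hc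
    have hc' : 0 < c' := hc0.trans_lt hcc'
    obtain ⟨β, hβ, hβa⟩ := hlower c' hc' hc'l
    filter_upwards [((tendsto_rpow_one_div_natCast hβ).mul_const c').eventually
      (lt_mem_nhds (by simpa using hcc')), eventually_ne_atTop 0] with k hk hk0
    calc c < β ^ ((1 : ℝ) / k) * c' := hk
      _ = (β * c' ^ k) ^ ((1 : ℝ) / k) := by
        rw [Real.mul_rpow hβ.le (pow_nonneg hc'.le k), one_div,
          Real.pow_rpow_inv_natCast hc'.le hk0]
      _ ≤ a k ^ ((1 : ℝ) / k) := Real.rpow_le_rpow (by positivity) (hβa k) (by positivity)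
  · filter_upwards [((tendsto_rpow_one_div_natCast hM).mul_const l).eventually
      (gt_mem_nhds (by simpa using hd)), hupper, eventually_ne_atTop 0] with k hk hak hk0
    calc a k ^ ((1 : ℝ) / k) ≤ (M * l ^ k) ^ ((1 : ℝ) / k) :=
          Real.rpow_le_rpow (ha k) hak (by positivity)
      _ = M ^ ((1 : ℝ) / k) * l := by
        rw [Real.mul_rpow hM.le (pow_nonneg hl k), one_div, Real.pow_rpow_inv_natCast hl hk0]
      _ < d := hk

theorem lower_collatzWielandt_iterates_general (n : ℕ) (hn : 0 < n)
    (f : (Fin n → ℝ) → (Fin n → ℝ))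
    (hf_mono : ∀ x y, (∀ i, 0 ≤ x i) → (∀ i, 0 ≤ y i) → (∀ i, x i ≤ y i) →
      ∀ i, f x i ≤ f y i)
    (hf_hom : ∀ (t : ℝ), 0 < t → ∀ x, (∀ i, 0 ≤ x i) → f (t • x) = t • f x)
    (x : Fin n → ℝ) (hx : ∀ i, 0 < x i) :
    Filter.Tendsto (fun k : ℕ => (⨅ i, f^[k] x i) ^ ((1 : ℝ) / k))
      Filter.atTop
      (nhds (⨆ y : {y : Fin n → ℝ // ∀ i, 0 < y i}, ⨅ i, f y.1 i / y.1 i)) := by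
  have : Nonempty (Fin n) := ⟨⟨0, hn⟩⟩
  have hf : IsOrderPreservingHomogeneous f := ⟨hf_mono, hf_hom⟩
  obtain ⟨M, hM⟩ := Finite.bddAbove_range x
  have hxM : ∀ i, x i ≤ M := fun i => hM ⟨i, rfl⟩
  refine tendsto_rpow_one_div_of_pow_bounds (M := M)
    (fun k => le_ciInf fun i => (hf.iterate k).nonneg (fun j => (hx j).le) i)
    ((hx ⟨0, hn⟩).trans_le (hxM _)) hf.lowerCollatzWielandt_nonneg
    ((eventually_ne_atTop 0).mono fun k hk => hf.iInf_iterate_le hx hxM hk)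
    fun c hc hcl => hf.exists_mul_pow_le_iInf_iterate_of_lt hx hc hcl

/-- For an order-preserving homogeneous map `f` of the nonnegative orthant, the lower
Collatz-Wielandt number `λ(f) = sup_{x ≫ 0} min_i f(x)_i/x_i` equals
`lim_{k→∞} (min_i f^k(x)_i)^{1/k}` for every strictly positive `x`. -/
theorem lower_collatzWielandt_iterates (n : ℕ) (hn : 0 < n)
    (f : (Fin n → ℝ) → (Fin n → ℝ))
    (hf_nonneg : ∀ x, (∀ i, 0 ≤ x i) → ∀ i, 0 ≤ f x i)
    (hf_mono : ∀ x y, (∀ i, 0 ≤ x i) → (∀ i, 0 ≤ y i) → (∀ i, x i ≤ y i) →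
      ∀ i, f x i ≤ f y i)
    (hf_hom : ∀ (t : ℝ), 0 < t → ∀ x, (∀ i, 0 ≤ x i) → f (t • x) = t • f x)
    (x : Fin n → ℝ) (hx : ∀ i, 0 < x i) :
    Filter.Tendsto (fun k : ℕ => (⨅ i, f^[k] x i) ^ ((1 : ℝ) / k))
      Filter.atTop
      (nhds (⨆ y : {y : Fin n → ℝ // ∀ i, 0 < y i}, ⨅ i, f y.1 i / y.1 i)) :=
  lower_collatzWielandt_iterates_general n hn f hf_mono hf_hom x hx
end

section
/- Let f: R^n_{>0} → R^n_{>0} be order-preserving and homogeneous. The minimum displacement of f in Hilbert's projective metric equals log r(f) − log λ(f), i.e., inf over strictly positive x of d_H(x, f(x)) = log r(f) − log λ(f). -/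
/-!
For `x > 0` write `M(x) = maxᵢ f(x)ᵢ / xᵢ` and `m(x) = minᵢ f(x)ᵢ / xᵢ`, so that
`d_H(x, f x) = log M(x) - log m(x)`, `r(f) = inf M` and `λ(f) = sup m`. Monotonicity and
homogeneity give `m(y) ≤ M(x)` for all `x, y`, whence `d_H(x, f x) ≥ log r(f) - log λ(f)`.
Conversely, given `a < λ(f) ≤ r(f) < b`, pick `u` with `f u ≤ b u` and `v` with `a v ≤ f v`,
rescaled so that `v ≤ u`. The monotone map `x ↦ (x ⊔ b⁻¹ f x) ⊓ a⁻¹ f x` sends the order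
interval `[v, u]` into itself, and by Knaster–Tarski has a fixed point `z` there; any such `z`
satisfies `a z ≤ f z ≤ b z`, so `d_H(z, f z) ≤ log b - log a`.
-/

open Set Real

theorem exists_fixedPoint_of_monotoneOn_Icc {α : Type*} [ConditionallyCompleteLattice α]
    {g : α → α} {a b : α} (hab : a ≤ b) (hg : MonotoneOn g (Icc a b)) (ha : a ≤ g a)
    (hb : g b ≤ b) : ∃ x ∈ Icc a b, g x = x := by
  have hmaps : MapsTo g (Icc a b) (Icc a b) := fun x hx =>
    ⟨ha.trans (hg (left_mem_Icc.2 hab) hx hx.1), (hg hx (right_mem_Icc.2 hab) hx.2).trans hb⟩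
  have : Fact (a ≤ b) := ⟨hab⟩
  let G : Icc a b →o Icc a b := ⟨hmaps.restrict, fun x y hxy => hg x.2 y.2 hxy⟩
  exact ⟨G.lfp, G.lfp.2, congrArg Subtype.val G.map_lfp⟩

theorem exists_smul_le_and_le_smul_of_le {ι : Type*} {f : (ι → ℝ) → ι → ℝ}
    (hf_mono : MonotoneOn f {x | ∀ i, 0 < x i}) {a b : ℝ} (ha : 0 < a) (hab : a ≤ b)
    {w u : ι → ℝ} (hw : ∀ i, 0 < w i) (hwu : w ≤ u) (haw : a • w ≤ f w) (hbu : f u ≤ b • u) :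
    ∃ z, (∀ i, 0 < z i) ∧ a • z ≤ f z ∧ f z ≤ b • z := by
  have hb : 0 < b := ha.trans_le hab
  have hpos : ∀ x ∈ Icc w u, ∀ i, 0 < x i := fun x hx i => (hw i).trans_le (hx.1 i)
  set Θ : (ι → ℝ) → ι → ℝ := fun x => (x ⊔ b⁻¹ • f x) ⊓ a⁻¹ • f x
  have hΘ : MonotoneOn Θ (Icc w u) := fun x hx y hy hxy => by
    have hfxy : f x ≤ f y := hf_mono (hpos x hx) (hpos y hy) hxy
    exact inf_le_inf (sup_le_sup hxy (smul_le_smul_of_nonneg_left hfxy (by positivity)))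
      (smul_le_smul_of_nonneg_left hfxy (by positivity))
  have hΘw : w ≤ Θ w := le_inf le_sup_left ((le_inv_smul_iff_of_pos ha).2 haw)
  have hΘu : Θ u ≤ u := inf_le_left.trans (sup_le le_rfl ((inv_smul_le_iff_of_pos hb).2 hbu))
  obtain ⟨z, hz, hΘz⟩ := exists_fixedPoint_of_monotoneOn_Icc hwu hΘ hΘw hΘu
  have hazf : a • z ≤ f z := (le_inv_smul_iff_of_pos ha).1 (hΘz.ge.trans inf_le_right)
  have hfz : 0 ≤ f z := (smul_nonneg ha.le fun i => (hpos z hz i).le).trans hazf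
  refine ⟨z, hpos z hz, hazf, (inv_smul_le_iff_of_pos hb).1 ?_⟩
  calc b⁻¹ • f z ≤ Θ z :=
        le_inf le_sup_right (smul_le_smul_of_nonneg_right (inv_anti₀ ha hab) hfz)
    _ = z := hΘz

section FiniteInfSup

variable {ι : Type*} [Finite ι] [Nonempty ι]

theorem ciSup_inv_eq_inv_ciInf {g : ι → ℝ} (hg : ∀ i, 0 < g i) :
    ⨆ i, (g i)⁻¹ = (⨅ i, g i)⁻¹ := by
  obtain ⟨j, hj⟩ := exists_eq_ciInf_of_finite (f := g)
  rw [← hj]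
  refine le_antisymm (ciSup_le fun i => inv_anti₀ (hg j) ?_)
    (le_ciSup (f := fun i => (g i)⁻¹) (finite_range _).bddAbove j)
  exact hj ▸ ciInf_le (finite_range _).bddBelow i

theorem ciInf_inv_eq_inv_ciSup {g : ι → ℝ} (hg : ∀ i, 0 < g i) :
    ⨅ i, (g i)⁻¹ = (⨆ i, g i)⁻¹ := by
  obtain ⟨j, hj⟩ := exists_eq_ciSup_of_finite (f := g)
  rw [← hj]
  refine le_antisymm (ciInf_le (finite_range _).bddBelow j) (le_ciInf fun i => inv_anti₀ (hg i) ?_)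
  exact hj ▸ le_ciSup (finite_range _).bddAbove i

theorem log_ciSup_div_sub_log_ciInf_div_comm {x y : ι → ℝ} (hx : ∀ i, 0 < x i)
    (hy : ∀ i, 0 < y i) :
    log (⨆ i, x i / y i) - log (⨅ i, x i / y i)
      = log (⨆ i, y i / x i) - log (⨅ i, y i / x i) := by
  have hpos : ∀ i, 0 < y i / x i := fun i => div_pos (hy i) (hx i)
  have hsup := ciSup_inv_eq_inv_ciInf hpos
  have hinf := ciInf_inv_eq_inv_ciSup hpos
  simp only [inv_div] at hsup hinf
  rw [hsup, hinf, log_inv, log_inv]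
  ring

end FiniteInfSup

theorem iInf_log_sub_log_eq {X : Type*} [Nonempty X] {M m : X → ℝ} (hm : ∀ x, 0 < m x)
    (hmM : ∀ x y, m y ≤ M x)
    (hsandwich : ∀ a b, 0 < a → a < ⨆ x, m x → ⨅ x, M x < b → ∃ x, a ≤ m x ∧ M x ≤ b) :
    ⨅ x, (log (M x) - log (m x)) = log (⨅ x, M x) - log (⨆ x, m x) := by
  obtain ⟨x₀⟩ := ‹Nonempty X›
  have hbddM : BddBelow (range M) := ⟨m x₀, forall_mem_range.2 fun x => hmM x x₀⟩
  have hbddm : BddAbove (range m) := ⟨M x₀, forall_mem_range.2 fun y => hmM x₀ y⟩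
  have hlam_pos : 0 < ⨆ x, m x := (hm x₀).trans_le (le_ciSup hbddm x₀)
  have hr_pos : 0 < ⨅ x, M x :=
    hlam_pos.trans_le (le_ciInf fun x => ciSup_le fun y => hmM x y)
  have hlower : ∀ x, log (⨅ x, M x) - log (⨆ x, m x) ≤ log (M x) - log (m x) := fun x =>
    sub_le_sub (log_le_log hr_pos (ciInf_le hbddM x)) (log_le_log (hm x) (le_ciSup hbddm x))
  refine le_antisymm (le_of_forall_pos_le_add fun ε hε => ?_) (le_ciInf hlower)
  obtain ⟨x, hmx, hMx⟩ := hsandwich ((⨆ x, m x) * exp (-(ε / 2))) ((⨅ x, M x) * exp (ε / 2))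
    (by positivity) (mul_lt_of_lt_one_right hlam_pos (exp_lt_one_iff.2 (by linarith)))
    (lt_mul_of_one_lt_right hr_pos (one_lt_exp_iff.2 (by linarith)))
  calc ⨅ x, (log (M x) - log (m x)) ≤ log (M x) - log (m x) :=
        ciInf_le ⟨_, forall_mem_range.2 hlower⟩ x
    _ ≤ log ((⨅ x, M x) * exp (ε / 2)) - log ((⨆ x, m x) * exp (-(ε / 2))) :=
        sub_le_sub (log_le_log ((hm x).trans_le (hmM x x)) hMx) (log_le_log (by positivity) hmx)
    _ = log (⨅ x, M x) - log (⨆ x, m x) + ε := by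
        rw [log_mul hr_pos.ne' (exp_pos _).ne', log_mul hlam_pos.ne' (exp_pos _).ne', log_exp,
          log_exp]
        ring

section CollatzWielandt

variable {ι : Type*}

/-- `r(f) = ⨅ x > 0, cwUpper f x` and `λ(f) = ⨆ x > 0, cwLower f x`. -/
noncomputable def cwUpper (f : (ι → ℝ) → ι → ℝ) (x : ι → ℝ) : ℝ := ⨆ i, f x i / x i

noncomputable def cwLower (f : (ι → ℝ) → ι → ℝ) (x : ι → ℝ) : ℝ := ⨅ i, f x i / x i

instance : Nonempty {x : ι → ℝ // ∀ i, 0 < x i} := ⟨⟨1, fun _ => one_pos⟩⟩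

variable [Finite ι] [Nonempty ι] {f : (ι → ℝ) → ι → ℝ}

theorem cwUpper_le_iff {x : ι → ℝ} (hx : ∀ i, 0 < x i) {c : ℝ} :
    cwUpper f x ≤ c ↔ f x ≤ c • x := by
  simp only [cwUpper, ciSup_le_iff (finite_range _).bddAbove, div_le_iff₀ (hx _), Pi.le_def,
    Pi.smul_apply, smul_eq_mul]

theorem le_cwLower_iff {x : ι → ℝ} (hx : ∀ i, 0 < x i) {c : ℝ} :
    c ≤ cwLower f x ↔ c • x ≤ f x := by
  simp only [cwLower, le_ciInf_iff (finite_range _).bddBelow, le_div_iff₀ (hx _), Pi.le_def,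
    Pi.smul_apply, smul_eq_mul]

theorem cwLower_pos {x : ι → ℝ} (hx : ∀ i, 0 < x i) (hfx : ∀ i, 0 < f x i) :
    0 < cwLower f x := by
  obtain ⟨j, hj⟩ := exists_eq_ciInf_of_finite (f := fun i => f x i / x i)
  exact (div_pos (hfx j) (hx j)).trans_eq hj

theorem le_of_smul_le_of_le_smul (hf_mono : MonotoneOn f {x | ∀ i, 0 < x i})
    (hf_hom : ∀ t : ℝ, 0 < t → ∀ x, (∀ i, 0 < x i) → f (t • x) = t • f x)
    {x y : ι → ℝ} (hx : ∀ i, 0 < x i) (hy : ∀ i, 0 < y i) {c d : ℝ}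
    (hcy : c • y ≤ f y) (hdx : f x ≤ d • x) : c ≤ d := by
  -- `α • x` touches `y` from above at `j`; evaluate `c y ≤ f y ≤ f (α x) ≤ d α x` there
  obtain ⟨j, hj⟩ := exists_eq_ciSup_of_finite (f := fun i => y i / x i)
  set α := ⨆ i, y i / x i
  have hα : 0 < α := hj ▸ div_pos (hy j) (hx j)
  have hαx : ∀ i, 0 < (α • x) i := fun i => mul_pos hα (hx i)
  have hyαx : y ≤ α • x := fun i =>
    (div_le_iff₀ (hx i)).1 (le_ciSup (f := fun i => y i / x i) (finite_range _).bddAbove i)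
  have hyj : y j = α * x j := by rw [← hj, div_mul_cancel₀ _ (hx j).ne']
  have key : c * y j ≤ d * y j :=
    calc c * y j ≤ f y j := hcy j
      _ ≤ f (α • x) j := hf_mono hy hαx hyαx j
      _ = α * f x j := by rw [hf_hom α hα x hx]; rfl
      _ ≤ α * (d * x j) := mul_le_mul_of_nonneg_left (hdx j) hα.le
      _ = d * y j := by rw [hyj]; ring
  exact le_of_mul_le_mul_right key (hy j)

theorem cwLower_le_cwUpper (hf_mono : MonotoneOn f {x | ∀ i, 0 < x i})
    (hf_hom : ∀ t : ℝ, 0 < t → ∀ x, (∀ i, 0 < x i) → f (t • x) = t • f x)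
    {x y : ι → ℝ} (hx : ∀ i, 0 < x i) (hy : ∀ i, 0 < y i) : cwLower f y ≤ cwUpper f x :=
  le_of_smul_le_of_le_smul hf_mono hf_hom hx hy ((le_cwLower_iff hy).1 le_rfl)
    ((cwUpper_le_iff hx).1 le_rfl)

theorem exists_smul_le_and_le_smul (hf_mono : MonotoneOn f {x | ∀ i, 0 < x i})
    (hf_hom : ∀ t : ℝ, 0 < t → ∀ x, (∀ i, 0 < x i) → f (t • x) = t • f x)
    {a b : ℝ} (ha : 0 < a) (hab : a ≤ b) {u v : ι → ℝ} (hu : ∀ i, 0 < u i)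
    (hv : ∀ i, 0 < v i) (hav : a • v ≤ f v) (hbu : f u ≤ b • u) :
    ∃ z, (∀ i, 0 < z i) ∧ a • z ≤ f z ∧ f z ≤ b • z := by
  obtain ⟨j, hj⟩ := exists_eq_ciInf_of_finite (f := fun i => u i / v i)
  set t := ⨅ i, u i / v i
  have ht : 0 < t := (div_pos (hu j) (hv j)).trans_eq hj
  have htv : t • v ≤ u := fun i =>
    (le_div_iff₀ (hv i)).1 (ciInf_le (f := fun i => u i / v i) (finite_range _).bddBelow i)
  have hatv : a • t • v ≤ f (t • v) := by
    rw [hf_hom t ht v hv, smul_comm]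
    exact smul_le_smul_of_nonneg_left hav ht.le
  exact exists_smul_le_and_le_smul_of_le hf_mono ha hab (fun i => mul_pos ht (hv i)) htv hatv hbu

theorem exists_le_cwLower_and_cwUpper_le (hf_mono : MonotoneOn f {x | ∀ i, 0 < x i})
    (hf_hom : ∀ t : ℝ, 0 < t → ∀ x, (∀ i, 0 < x i) → f (t • x) = t • f x) {a b : ℝ}
    (ha : 0 < a) (hlam : a < ⨆ x : {x : ι → ℝ // ∀ i, 0 < x i}, cwLower f x.1)
    (hr : ⨅ x : {x : ι → ℝ // ∀ i, 0 < x i}, cwUpper f x.1 < b) :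
    ∃ x : {x : ι → ℝ // ∀ i, 0 < x i}, a ≤ cwLower f x.1 ∧ cwUpper f x.1 ≤ b := by
  obtain ⟨u, hub⟩ := exists_lt_of_ciInf_lt hr
  obtain ⟨v, hav⟩ := exists_lt_of_lt_ciSup hlam
  have hab : a ≤ b := hav.le.trans ((cwLower_le_cwUpper hf_mono hf_hom u.2 v.2).trans hub.le)
  obtain ⟨z, hz, hazf, hfzb⟩ := exists_smul_le_and_le_smul hf_mono hf_hom ha hab u.2 v.2
    ((le_cwLower_iff v.2).1 hav.le) ((cwUpper_le_iff u.2).1 hub.le)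
  exact ⟨⟨z, hz⟩, (le_cwLower_iff hz).2 hazf, (cwUpper_le_iff hz).2 hfzb⟩

end CollatzWielandt

/-- The minimum displacement of an order-preserving homogeneous map `f` of the strictly
positive orthant, in Hilbert's projective metric, equals `log r(f) − log λ(f)` where
`r(f)` and `λ(f)` are the upper and lower Collatz-Wielandt numbers. -/
theorem minimum_displacement_eq_log_r_sub_log_lambda (n : ℕ) (hn : 0 < n)
    (f : (Fin n → ℝ) → (Fin n → ℝ))
    (hf_pos : ∀ x, (∀ i, 0 < x i) → ∀ i, 0 < f x i)
    (hf_mono : ∀ x y, (∀ i, 0 < x i) → (∀ i, 0 < y i) → (∀ i, x i ≤ y i) →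
      ∀ i, f x i ≤ f y i)
    (hf_hom : ∀ (t : ℝ), 0 < t → ∀ x, (∀ i, 0 < x i) → f (t • x) = t • f x) :
    (⨅ x : {x : Fin n → ℝ // ∀ i, 0 < x i},
        (Real.log (⨆ i, x.1 i / f x.1 i) - Real.log (⨅ i, x.1 i / f x.1 i)))
      = Real.log (⨅ x : {x : Fin n → ℝ // ∀ i, 0 < x i}, ⨆ i, f x.1 i / x.1 i)
        - Real.log (⨆ x : {x : Fin n → ℝ // ∀ i, 0 < x i}, ⨅ i, f x.1 i / x.1 i) := by
  have : Nonempty (Fin n) := ⟨⟨0, hn⟩⟩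
  have hmono : MonotoneOn f {x | ∀ i, 0 < x i} := fun x hx y hy hxy => hf_mono x y hx hy hxy
  rw [iInf_congr fun x : {x : Fin n → ℝ // ∀ i, 0 < x i} =>
    log_ciSup_div_sub_log_ciInf_div_comm (x := x.1) (y := f x.1) x.2 (hf_pos x.1 x.2)]
  exact iInf_log_sub_log_eq (M := fun x : {x : Fin n → ℝ // ∀ i, 0 < x i} => cwUpper f x.1)
    (m := fun x => cwLower f x.1)
    (fun x => cwLower_pos x.2 (hf_pos x.1 x.2))
    (fun x y => cwLower_le_cwUpper hmono hf_hom x.2 y.2)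
    (fun _ _ ha => exists_le_cwLower_and_cwUpper_le hmono hf_hom ha)
end

section
/- If an order-preserving homogeneous map f: R^n_{>0} → R^n_{>0} has an eigenvector x with all entries strictly positive (f(x) = μx with μ > 0), then the upper and lower Collatz-Wielandt numbers coincide: r(f) = λ(f) = μ. -/
/-!
Compare an arbitrary positive `y` with the eigenvector `x`: scaling `x` by the largest ratio
`t = y i / x i` gives `y ≤ t • x` with equality at `i`, so monotonicity and homogeneity yield
`f y i ≤ f (t • x) i = μ * y i`; hence every lower Collatz-Wielandt ratio is at most `μ`, and
symmetrically every upper one is at least `μ`. Both bounds are attained at `x` itself.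
-/

section RatioBounds

variable {ι : Type*} [Finite ι] [Nonempty ι] {x : ι → ℝ}

lemma exists_le_div_mul (hx : ∀ i, 0 < x i) (y : ι → ℝ) :
    ∃ i, ∀ j, y j ≤ y i / x i * x j := by
  obtain ⟨i, hi⟩ := Finite.exists_max fun j => y j / x j
  exact ⟨i, fun j => (div_le_iff₀ (hx j)).1 (hi j)⟩

lemma exists_div_mul_le (hx : ∀ i, 0 < x i) (y : ι → ℝ) :
    ∃ i, ∀ j, y i / x i * x j ≤ y j := by
  obtain ⟨i, hi⟩ := Finite.exists_min fun j => y j / x j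
  exact ⟨i, fun j => (le_div_iff₀ (hx j)).1 (hi j)⟩

variable {f : (ι → ℝ) → (ι → ℝ)}
  (hf_mono : ∀ x y, (∀ i, 0 < x i) → (∀ i, 0 < y i) → (∀ i, x i ≤ y i) → ∀ i, f x i ≤ f y i)
  (hf_hom : ∀ (t : ℝ), 0 < t → ∀ x, (∀ i, 0 < x i) → f (t • x) = t • f x)
  {μ : ℝ} (hx : ∀ i, 0 < x i) (hex : f x = μ • x)
  {y : ι → ℝ} (hy : ∀ i, 0 < y i)
include hf_mono hf_hom hx hex hy

lemma exists_apply_le_mul_of_eigenvector : ∃ i, f y i ≤ μ * y i := by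
  obtain ⟨i, hi⟩ := exists_le_div_mul hx y
  have ht : 0 < y i / x i := div_pos (hy i) (hx i)
  refine ⟨i, ?_⟩
  calc f y i ≤ f ((y i / x i) • x) i := hf_mono _ _ hy (fun j => mul_pos ht (hx j)) hi i
    _ = μ * y i := by
      rw [hf_hom _ ht x hx, hex]
      simp only [Pi.smul_apply, smul_eq_mul]
      field_simp [(hx i).ne']

lemma exists_mul_le_apply_of_eigenvector : ∃ i, μ * y i ≤ f y i := by
  obtain ⟨i, hi⟩ := exists_div_mul_le hx y
  have ht : 0 < y i / x i := div_pos (hy i) (hx i)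
  refine ⟨i, ?_⟩
  calc μ * y i = f ((y i / x i) • x) i := by
        rw [hf_hom _ ht x hx, hex]
        simp only [Pi.smul_apply, smul_eq_mul]
        field_simp [(hx i).ne']
    _ ≤ f y i := hf_mono _ _ (fun j => mul_pos ht (hx j)) hy hi i

lemma ciInf_apply_div_le_of_eigenvector : ⨅ i, f y i / y i ≤ μ := by
  obtain ⟨i, hi⟩ := exists_apply_le_mul_of_eigenvector hf_mono hf_hom hx hex hy
  exact ciInf_le_of_le (Finite.bddBelow_range _) i ((div_le_iff₀ (hy i)).2 (by linarith))

lemma le_ciSup_apply_div_of_eigenvector : μ ≤ ⨆ i, f y i / y i := by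
  obtain ⟨i, hi⟩ := exists_mul_le_apply_of_eigenvector hf_mono hf_hom hx hex hy
  exact le_ciSup_of_le (Finite.bddAbove_range _) i ((le_div_iff₀ (hy i)).2 (by linarith))

end RatioBounds

lemma apply_div_eq_of_eigenvector {ι : Type*} {f : (ι → ℝ) → (ι → ℝ)} {x : ι → ℝ} {μ : ℝ}
    (hx : ∀ i, 0 < x i) (hex : f x = μ • x) (i : ι) : f x i / x i = μ := by
  rw [hex, Pi.smul_apply, smul_eq_mul, mul_div_assoc, div_self (hx i).ne', mul_one]

theorem collatzWielandt_eq_of_positive_eigenvector_general (n : ℕ) (hn : 0 < n)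
    (f : (Fin n → ℝ) → (Fin n → ℝ))
    (hf_mono : ∀ x y, (∀ i, 0 < x i) → (∀ i, 0 < y i) → (∀ i, x i ≤ y i) →
      ∀ i, f x i ≤ f y i)
    (hf_hom : ∀ (t : ℝ), 0 < t → ∀ x, (∀ i, 0 < x i) → f (t • x) = t • f x)
    (x : Fin n → ℝ) (hx : ∀ i, 0 < x i) (μ : ℝ) (hex : f x = μ • x) :
    (⨅ y : {y : Fin n → ℝ // ∀ i, 0 < y i}, ⨆ i, f y.1 i / y.1 i) = μ ∧
    (⨆ y : {y : Fin n → ℝ // ∀ i, 0 < y i}, ⨅ i, f y.1 i / y.1 i) = μ := by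
  have : Nonempty (Fin n) := ⟨⟨0, hn⟩⟩
  have : Nonempty {y : Fin n → ℝ // ∀ i, 0 < y i} := ⟨⟨x, hx⟩⟩
  have upper_ge (y : {y : Fin n → ℝ // ∀ i, 0 < y i}) : μ ≤ ⨆ i, f y.1 i / y.1 i :=
    le_ciSup_apply_div_of_eigenvector hf_mono hf_hom hx hex y.2
  have lower_le (y : {y : Fin n → ℝ // ∀ i, 0 < y i}) : ⨅ i, f y.1 i / y.1 i ≤ μ :=
    ciInf_apply_div_le_of_eigenvector hf_mono hf_hom hx hex y.2
  have ratio_x : (fun i => f x i / x i) = fun _ => μ := funext (apply_div_eq_of_eigenvector hx hex)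
  constructor
  · refine le_antisymm (ciInf_le_of_le ⟨μ, ?_⟩ ⟨x, hx⟩ ?_) (le_ciInf upper_ge)
    · rintro _ ⟨y, rfl⟩
      exact upper_ge y
    · simp only [ratio_x, ciSup_const, le_refl]
  · refine le_antisymm (ciSup_le lower_le) (le_ciSup_of_le ⟨μ, ?_⟩ ⟨x, hx⟩ ?_)
    · rintro _ ⟨y, rfl⟩
      exact lower_le y
    · simp only [ratio_x, ciInf_const, le_refl]

/-- If an order-preserving homogeneous map `f` of the strictly positive orthant has a
strictly positive eigenvector with eigenvalue `μ > 0`, then the upper and lower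
Collatz-Wielandt numbers both equal `μ`. -/
theorem collatzWielandt_eq_of_positive_eigenvector (n : ℕ) (hn : 0 < n)
    (f : (Fin n → ℝ) → (Fin n → ℝ))
    (hf_pos : ∀ x, (∀ i, 0 < x i) → ∀ i, 0 < f x i)
    (hf_mono : ∀ x y, (∀ i, 0 < x i) → (∀ i, 0 < y i) → (∀ i, x i ≤ y i) →
      ∀ i, f x i ≤ f y i)
    (hf_hom : ∀ (t : ℝ), 0 < t → ∀ x, (∀ i, 0 < x i) → f (t • x) = t • f x)
    (x : Fin n → ℝ) (hx : ∀ i, 0 < x i) (μ : ℝ) (hμ : 0 < μ) (hex : f x = μ • x) :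
    (⨅ y : {y : Fin n → ℝ // ∀ i, 0 < y i}, ⨆ i, f y.1 i / y.1 i) = μ ∧
    (⨆ y : {y : Fin n → ℝ // ∀ i, 0 < y i}, ⨅ i, f y.1 i / y.1 i) = μ :=
  collatzWielandt_eq_of_positive_eigenvector_general n hn f hf_mono hf_hom x hx μ hex
end

section
/- Let g: (0,∞) → (0,∞) be nondecreasing, multiplicatively convex, and real analytic. Then g is bounded (equivalently constant) if and only if g'(x) = 0 for some x > 0. -/
/-!
Put `h t = log (g (exp t))`, a convex nondecreasing function on `ℝ`. If `g` is bounded, `h` is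
bounded above, and a convex function on the whole line that is bounded above is constant.
Conversely, if `g' x₀ = 0` then `h' (log x₀) = 0`, so `log x₀` minimises the convex function `h`;
being nondecreasing, `h` is then constant on `(-∞, log x₀]`, i.e. `g` is constant on `(0, x₀]`,
and the identity theorem spreads this to all of `(0, ∞)`.
-/

open Real Set Filter Topology

namespace ConvexOn

variable {E : Type*} [AddCommGroup E] [Module ℝ E] {f : E → ℝ}

/-- Write `y = (1 - θ) • x + θ • z` with `z` far out on the ray from `x` through `y`: convexity
gives `f y ≤ (1 - θ) * f x + θ * M`, and `θ → 0`. -/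
lemma le_of_bddAbove (hf : ConvexOn ℝ univ f) (hb : BddAbove (range f)) (x y : E) :
    f y ≤ f x := by
  obtain ⟨M, hM⟩ := hb
  have hbound : ∀ θ : ℝ, 0 < θ → θ ≤ 1 → f y ≤ (1 - θ) * f x + θ * M := by
    intro θ hθ hθ1
    have hy : (1 - θ) • x + θ • (x + θ⁻¹ • (y - x)) = y := by
      rw [smul_add, smul_smul, mul_inv_cancel₀ hθ.ne', one_smul, sub_smul, one_smul]
      abel
    calc f y = f ((1 - θ) • x + θ • (x + θ⁻¹ • (y - x))) := by rw [hy]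
      _ ≤ (1 - θ) • f x + θ • f (x + θ⁻¹ • (y - x)) :=
        hf.2 (mem_univ _) (mem_univ _) (by linarith) hθ.le (by ring)
      _ ≤ (1 - θ) * f x + θ * M := by
        simp only [smul_eq_mul]
        gcongr
        exact hM (mem_range_self _)
  have hlim : Tendsto (fun θ : ℝ => (1 - θ) * f x + θ * M) (𝓝[>] 0) (𝓝 (f x)) := by
    have : Tendsto (fun θ : ℝ => (1 - θ) * f x + θ * M) (𝓝 0) (𝓝 ((1 - 0) * f x + 0 * M)) :=
      (Continuous.tendsto (by fun_prop) 0)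
    simpa using this.mono_left nhdsWithin_le_nhds
  refine ge_of_tendsto hlim ?_
  filter_upwards [Ioo_mem_nhdsGT one_pos] with θ hθ using hbound θ hθ.1 hθ.2.le

lemma eq_of_bddAbove (hf : ConvexOn ℝ univ f) (hb : BddAbove (range f)) (x y : E) :
    f x = f y :=
  le_antisymm (hf.le_of_bddAbove hb y x) (hf.le_of_bddAbove hb x y)

end ConvexOn

lemma ConvexOn.isMinOn_of_hasDerivAt_zero {S : Set ℝ} {f : ℝ → ℝ} {x : ℝ} (hf : ConvexOn ℝ S f)
    (hx : x ∈ interior S) (hd : HasDerivAt f 0 x) : IsMinOn f S x :=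
  hf.isMinOn_of_rightDeriv_eq_zero hx (hd.hasDerivWithinAt.derivWithin (uniqueDiffWithinAt_Ioi x))

section MultiplicativelyConvex

variable {g : ℝ → ℝ}

lemma eq_of_log_comp_exp_eq (hg_pos : ∀ x, 0 < x → 0 < g x) {x y : ℝ} (hx : 0 < x) (hy : 0 < y)
    (h : log (g (exp (log x))) = log (g (exp (log y)))) : g x = g y := by
  rw [exp_log hx, exp_log hy] at h
  exact log_injOn_pos (hg_pos x hx) (hg_pos y hy) h

lemma hasDerivAt_log_comp_exp_of_deriv_eq_zero {x₀ : ℝ} (hx₀ : 0 < x₀)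
    (hg : DifferentiableAt ℝ g x₀) (hgx₀ : g x₀ ≠ 0) (hd : deriv g x₀ = 0) :
    HasDerivAt (fun t => log (g (exp t))) 0 (log x₀) := by
  have hg' : HasDerivAt g 0 (exp (log x₀)) := by
    rw [exp_log hx₀, ← hd]
    exact hg.hasDerivAt
  have hgexp := hg'.comp (log x₀) (hasDerivAt_exp (log x₀))
  simpa using hgexp.log (by simpa [exp_log hx₀] using hgx₀)

lemma eqOn_Ioi_of_bddAbove (hg_pos : ∀ x, 0 < x → 0 < g x)
    (hg_conv : ConvexOn ℝ univ (fun t => log (g (exp t)))) (hb : BddAbove (g '' Ioi 0)) :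
    EqOn g (fun _ => g 1) (Ioi 0) := by
  obtain ⟨M, hM⟩ := hb
  have hh : BddAbove (range fun t => log (g (exp t))) := by
    refine ⟨log M, ?_⟩
    rintro _ ⟨t, rfl⟩
    exact log_le_log (hg_pos _ (exp_pos t)) (hM (mem_image_of_mem g (exp_pos t)))
  intro x hx
  exact eq_of_log_comp_exp_eq hg_pos hx one_pos (hg_conv.eq_of_bddAbove hh _ _)

lemma eqOn_Ioo_of_deriv_eq_zero (hg_pos : ∀ x, 0 < x → 0 < g x)
    (hg_mono : ∀ x y, 0 < x → x ≤ y → g x ≤ g y)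
    (hg_conv : ConvexOn ℝ univ (fun t => log (g (exp t))))
    {x₀ : ℝ} (hx₀ : 0 < x₀) (hg : DifferentiableAt ℝ g x₀) (hd : deriv g x₀ = 0) :
    EqOn g (fun _ => g x₀) (Ioo 0 x₀) := by
  have hmin : IsMinOn (fun t => log (g (exp t))) univ (log x₀) :=
    hg_conv.isMinOn_of_hasDerivAt_zero (by simp)
      (hasDerivAt_log_comp_exp_of_deriv_eq_zero hx₀ hg (hg_pos x₀ hx₀).ne' hd)
  intro x ⟨hx, hxx₀⟩
  refine eq_of_log_comp_exp_eq hg_pos hx hx₀ (le_antisymm ?_ (hmin (mem_univ _)))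
  rw [exp_log hx, exp_log hx₀]
  exact log_le_log (hg_pos x hx) (hg_mono x x₀ hx hxx₀.le)

lemma eqOn_Ioi_of_deriv_eq_zero (hg_pos : ∀ x, 0 < x → 0 < g x)
    (hg_mono : ∀ x y, 0 < x → x ≤ y → g x ≤ g y)
    (hg_conv : ConvexOn ℝ univ (fun t => log (g (exp t))))
    (hg_analytic : AnalyticOnNhd ℝ g (Ioi 0)) {x₀ : ℝ} (hx₀ : 0 < x₀) (hd : deriv g x₀ = 0) :
    EqOn g (fun _ => g x₀) (Ioi 0) := by
  have hIoo := eqOn_Ioo_of_deriv_eq_zero hg_pos hg_mono hg_conv hx₀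
    (hg_analytic x₀ hx₀).differentiableAt hd
  have hev : g =ᶠ[𝓝 (x₀ / 2)] fun _ => g x₀ :=
    eventually_of_mem (Ioo_mem_nhds (half_pos hx₀) (half_lt_self hx₀)) hIoo
  exact hg_analytic.eqOn_of_preconnected_of_eventuallyEq (fun _ _ => analyticAt_const)
    isPreconnected_Ioi (half_pos hx₀) hev

end MultiplicativelyConvex

/-- A nondecreasing, multiplicatively convex, real analytic function
`g : (0,∞) → (0,∞)` is bounded on `(0,∞)` if and only if its derivative vanishes at
some point `x > 0`. -/
theorem mult_convex_analytic_bounded_iff_deriv_zero (g : ℝ → ℝ)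
    (hg_pos : ∀ x, 0 < x → 0 < g x)
    (hg_mono : ∀ x y, 0 < x → x ≤ y → g x ≤ g y)
    (hg_conv : ConvexOn ℝ Set.univ (fun t : ℝ => Real.log (g (Real.exp t))))
    (hg_analytic : AnalyticOnNhd ℝ g (Set.Ioi (0 : ℝ))) :
    BddAbove (g '' Set.Ioi (0 : ℝ)) ↔ ∃ x, 0 < x ∧ deriv g x = 0 := by
  constructor
  · intro hb
    have hconst : g =ᶠ[𝓝 1] fun _ => g 1 :=
      eventually_of_mem (Ioi_mem_nhds one_pos) (eqOn_Ioi_of_bddAbove hg_pos hg_conv hb)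
    exact ⟨1, one_pos, hconst.deriv_eq.trans (deriv_const _ _)⟩
  · rintro ⟨x₀, hx₀, hd⟩
    refine ⟨g x₀, ?_⟩
    rintro _ ⟨x, hx, rfl⟩
    exact (eqOn_Ioi_of_deriv_eq_zero hg_pos hg_mono hg_conv hg_analytic hx₀ hd hx).le
end

section
/- Let X be a real Banach space and let x, y ∈ X with ‖x‖ = 1. Then there exists a norming functional x* (i.e., ‖x*‖ = 1 and x*(x) = 1) such that lim_{t→∞} (‖tx − y‖ − x*(tx − y)) = 0. -/
/-!
For a unit vector `x`, the function `p z = lim_{t → ∞} (‖t x + z‖ - t)` (the one-sided derivative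
of the norm at `x` in direction `z`) exists because `t ↦ ‖t x + z‖ - t` is antitone and bounded
below by `-‖z‖`. It is sublinear, `p ≤ ‖·‖`, and `p (c x) = c`. Hahn–Banach yields a linear
`x* ≤ p` with `x* (-y) = p (-y)`; then `‖x*‖ ≤ 1`, `x* x = 1`, and
`‖t x - y‖ - x* (t x - y) = (‖t x - y‖ - t) - x* (-y) → p (-y) - x* (-y) = 0`.
-/

open Filter Topology

theorem LinearMap.exists_le_sublinear_eq {E : Type*} [AddCommGroup E] [Module ℝ E] (N : E → ℝ)
    (N_hom : ∀ c : ℝ, 0 < c → ∀ x, N (c • x) = c * N x) (N_add : ∀ x y, N (x + y) ≤ N x + N y)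
    (v : E) : ∃ g : E →ₗ[ℝ] ℝ, g v = N v ∧ ∀ x, g x ≤ N x := by
  have N_zero : N 0 = 0 := by
    have := N_hom 2 two_pos 0
    rw [smul_zero] at this
    linarith
  have smul_le : ∀ c : ℝ, c * N v ≤ N (c • v) := by
    intro c
    rcases lt_trichotomy c 0 with hc | rfl | hc
    · have := N_add (c • v) ((-c) • v)
      rw [N_hom (-c) (neg_pos.2 hc), ← add_smul, add_neg_cancel, zero_smul, N_zero] at this
      linarith
    · simp [N_zero]
    · exact (N_hom c hc v).ge
  have hv : ∀ c : ℝ, c • v = 0 → c • N v = 0 := by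
    intro c hcv
    rcases smul_eq_zero.1 hcv with rfl | rfl
    · exact zero_smul ℝ _
    · rw [N_zero, smul_zero]
  let f := LinearPMap.mkSpanSingleton' (σ := RingHom.id ℝ) v (N v) hv
  obtain ⟨g, hgf, hgN⟩ := exists_extension_of_le_sublinear f N N_hom N_add <| by
    rintro ⟨_, hz⟩
    obtain ⟨c, rfl⟩ := Submodule.mem_span_singleton.1 hz
    exact (LinearPMap.mkSpanSingleton'_apply v (N v) hv c hz).trans_le (smul_le c)
  refine ⟨g, ?_, hgN⟩
  exact (hgf ⟨v, Submodule.mem_span_singleton_self v⟩).trans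
    (LinearPMap.mkSpanSingleton'_apply_self v (N v) hv _)

theorem StrongDual.exists_le_sublinear_eq {E : Type*} [SeminormedAddCommGroup E]
    [NormedSpace ℝ E] (N : E → ℝ) (N_hom : ∀ c : ℝ, 0 < c → ∀ x, N (c • x) = c * N x)
    (N_add : ∀ x y, N (x + y) ≤ N x + N y) (N_le : ∀ x, N x ≤ ‖x‖) (v : E) :
    ∃ F : StrongDual ℝ E, ‖F‖ ≤ 1 ∧ F v = N v ∧ ∀ x, F x ≤ N x := by
  obtain ⟨g, hgv, hgN⟩ := LinearMap.exists_le_sublinear_eq N N_hom N_add v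
  have bound : ∀ x, ‖g x‖ ≤ 1 * ‖x‖ := by
    intro x
    rw [one_mul, Real.norm_eq_abs, abs_le]
    have := (hgN (-x)).trans (N_le (-x))
    rw [map_neg, norm_neg] at this
    exact ⟨by linarith, (hgN x).trans (N_le x)⟩
  exact ⟨g.mkContinuous 1 bound, LinearMap.mkContinuous_norm_le _ zero_le_one _, hgv, hgN⟩

section AsymptoticNorm

variable {E : Type*} [SeminormedAddCommGroup E] [NormedSpace ℝ E] {x : E}

/-- For a unit vector `x` the infimum is the limit as `t → ∞` (`tendsto_asymptoticNorm`). -/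
noncomputable def asymptoticNorm (x z : E) : ℝ := ⨅ t : ℝ, (‖t • x + z‖ - t)

theorem antitone_norm_smul_add_sub (hx : ‖x‖ = 1) (z : E) :
    Antitone fun t : ℝ => ‖t • x + z‖ - t := by
  intro s t hst
  have : ‖t • x + z‖ ≤ ‖s • x + z‖ + ‖(t - s) • x‖ := by
    rw [show t • x + z = s • x + z + (t - s) • x by rw [sub_smul]; abel]
    exact norm_add_le _ _
  rw [norm_smul, hx, mul_one, Real.norm_of_nonneg (sub_nonneg.2 hst)] at this
  linarith

theorem neg_norm_le_norm_smul_add_sub (hx : ‖x‖ = 1) (z : E) (t : ℝ) :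
    -‖z‖ ≤ ‖t • x + z‖ - t := by
  have : t ≤ ‖t • x‖ := by
    rw [norm_smul, hx, mul_one]
    exact Real.le_norm_self t
  linarith [norm_le_add_norm_add (t • x) z]

theorem bddBelow_range_norm_smul_add_sub (hx : ‖x‖ = 1) (z : E) :
    BddBelow (Set.range fun t : ℝ => ‖t • x + z‖ - t) :=
  ⟨-‖z‖, by rintro _ ⟨t, rfl⟩; exact neg_norm_le_norm_smul_add_sub hx z t⟩

theorem tendsto_asymptoticNorm (hx : ‖x‖ = 1) (z : E) :
    Tendsto (fun t : ℝ => ‖t • x + z‖ - t) atTop (𝓝 (asymptoticNorm x z)) :=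
  tendsto_atTop_ciInf (antitone_norm_smul_add_sub hx z) (bddBelow_range_norm_smul_add_sub hx z)

theorem asymptoticNorm_le_norm (hx : ‖x‖ = 1) (z : E) : asymptoticNorm x z ≤ ‖z‖ := by
  simpa [asymptoticNorm] using ciInf_le (bddBelow_range_norm_smul_add_sub hx z) 0

theorem asymptoticNorm_add_le (hx : ‖x‖ = 1) (z w : E) :
    asymptoticNorm x (z + w) ≤ asymptoticNorm x z + asymptoticNorm x w := by
  have lhs := (tendsto_asymptoticNorm hx (z + w)).comp (tendsto_id.const_mul_atTop two_pos)
  have rhs := (tendsto_asymptoticNorm hx z).add (tendsto_asymptoticNorm hx w)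
  refine le_of_tendsto_of_tendsto' lhs rhs fun t => ?_
  have : (2 * t) • x + (z + w) = (t • x + z) + (t • x + w) := by rw [two_mul, add_smul]; abel
  simp only [Function.comp_apply, id, this]
  linarith [norm_add_le (t • x + z) (t • x + w)]

theorem asymptoticNorm_smul_of_pos (hx : ‖x‖ = 1) (z : E) {c : ℝ} (hc : 0 < c) :
    asymptoticNorm x (c • z) = c * asymptoticNorm x z := by
  refine tendsto_nhds_unique
    ((tendsto_asymptoticNorm hx (c • z)).comp (tendsto_id.const_mul_atTop hc))
    (((tendsto_asymptoticNorm hx z).const_mul c).congr fun t => ?_)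
  simp only [Function.comp_apply, id]
  rw [mul_sub, ← norm_smul_of_nonneg hc.le, smul_add, smul_smul]

theorem asymptoticNorm_smul_self (hx : ‖x‖ = 1) (c : ℝ) : asymptoticNorm x (c • x) = c := by
  refine tendsto_nhds_unique (tendsto_asymptoticNorm hx (c • x)) (tendsto_const_nhds.congr' ?_)
  filter_upwards [eventually_ge_atTop (-c)] with t ht
  rw [← add_smul, norm_smul, hx, mul_one, Real.norm_of_nonneg (by linarith)]
  ring

end AsymptoticNorm

theorem exists_norming_functional_asymptotic_general
    (X : Type*) [NormedAddCommGroup X] [NormedSpace ℝ X]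
    (x y : X) (hx : ‖x‖ = 1) :
    ∃ xstar : StrongDual ℝ X, ‖xstar‖ = 1 ∧ xstar x = 1 ∧
      Filter.Tendsto (fun t : ℝ => ‖t • x - y‖ - xstar (t • x - y))
        Filter.atTop (nhds 0) := by
  obtain ⟨F, hF_norm, hF_y, hF_le⟩ := StrongDual.exists_le_sublinear_eq (asymptoticNorm x)
    (fun _ hc z => asymptoticNorm_smul_of_pos hx z hc) (asymptoticNorm_add_le hx)
    (asymptoticNorm_le_norm hx) (-y)
  have hFx : F x = 1 := by
    have le_one := hF_le ((1 : ℝ) • x)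
    have neg_le := hF_le ((-1 : ℝ) • x)
    rw [asymptoticNorm_smul_self hx, map_smul, smul_eq_mul] at le_one neg_le
    linarith
  refine ⟨F, le_antisymm hF_norm ?_, hFx, ?_⟩
  · simpa [hFx, hx] using F.le_opNorm x
  · have := (tendsto_asymptoticNorm hx (-y)).sub_const (asymptoticNorm x (-y))
    rw [sub_self] at this
    refine this.congr fun t => ?_
    rw [← hF_y, sub_eq_add_neg (t • x), map_add, map_smul, hFx, smul_eq_mul, mul_one]
    ring

/-- For any unit vector `x` and any `y` in a real Banach space, there is a norming
functional `x*` of `x` with `lim_{t→∞} (‖t x − y‖ − x*(t x − y)) = 0`. -/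
theorem exists_norming_functional_asymptotic
    (X : Type*) [NormedAddCommGroup X] [NormedSpace ℝ X] [CompleteSpace X]
    (x y : X) (hx : ‖x‖ = 1) :
    ∃ xstar : StrongDual ℝ X, ‖xstar‖ = 1 ∧ xstar x = 1 ∧
      Filter.Tendsto (fun t : ℝ => ‖t • x - y‖ - xstar (t • x - y))
        Filter.atTop (nhds 0) :=
  exists_norming_functional_asymptotic_general X x y hx
end

section
/- Let f: R^n_{>0} → R^n_{>0} be order-preserving and homogeneous, and let J be a nonempty proper subset of [n]. Then there exists a strictly positive x with max_{j∈J} f(x)_j/x_j < min_{i∉J} f(x)_i/x_i if and only if r(f^J_0) < λ(f^{Jc}_∞). -/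
/-!
One direction is monotonicity: `P^J_0 x ≤ x ≤ P^{Jᶜ}_∞ x`. For the other, pick `t` strictly
between `r(f^J_0)` and `λ(f^{Jᶜ}_∞)`, witnessed by positive vectors `u` and `v`. The vector `x_s`
equal to `u` on `J` and to `s • v` off `J` tends to `P^J_0 u` as `s → 0`, while by homogeneity
`x_s = s • z_s`, where `z_s` equals `s⁻¹ • u` on `J` and `v` off `J`, and `z_s` tends to
`P^{Jᶜ}_∞ v`. Continuity of `f` then makes `x_s` separate the two ratios by `t` for small `s`.
-/

open ENNReal Filter Topology

section Ratios

variable {ι α : Type*} {l : Filter α} {g : α → ι → ℝ≥0∞} {g₀ : ι → ℝ≥0∞}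

theorem Filter.Tendsto.biSup_div_const (hg : Tendsto g l (𝓝 g₀)) (S : Finset ι)
    {w : ι → ℝ≥0∞} (hw : ∀ i ∈ S, w i ≠ 0) :
    Tendsto (fun a => ⨆ i ∈ S, g a i / w i) l (𝓝 (⨆ i ∈ S, g₀ i / w i)) := by
  simp only [← Finset.sup_eq_iSup]
  exact Tendsto.finset_sup_nhds_apply fun i hi =>
    ENNReal.Tendsto.div_const (tendsto_pi_nhds.1 hg i) (Or.inr (hw i hi))

theorem Filter.Tendsto.biInf_div_const (hg : Tendsto g l (𝓝 g₀)) (S : Finset ι)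
    {w : ι → ℝ≥0∞} (hw : ∀ i ∈ S, w i ≠ 0) :
    Tendsto (fun a => ⨅ i ∈ S, g a i / w i) l (𝓝 (⨅ i ∈ S, g₀ i / w i)) := by
  simp only [← Finset.inf_eq_iInf]
  exact Tendsto.finset_inf_nhds_apply fun i hi =>
    ENNReal.Tendsto.div_const (tendsto_pi_nhds.1 hg i) (Or.inr (hw i hi))

end Ratios

section Piecewise

variable {ι : Type*} [DecidableEq ι] (J : Finset ι)

theorem tendsto_piecewise_smul_nhds_zero (u : ι → ℝ≥0∞) {v : ι → ℝ≥0∞} (hv : ∀ i ∉ J, v i ≠ ⊤) :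
    Tendsto (fun s : ℝ≥0∞ => J.piecewise u (s • v)) (𝓝 0) (𝓝 (J.piecewise u 0)) := by
  refine tendsto_pi_nhds.2 fun i => ?_
  by_cases hi : i ∈ J
  · simp [hi]
  · simpa [hi] using ENNReal.Tendsto.mul_const (tendsto_id (x := 𝓝 (0 : ℝ≥0∞))) (Or.inr (hv i hi))

theorem tendsto_piecewise_inv_smul_nhds_zero {u : ι → ℝ≥0∞} (hu : ∀ i ∈ J, u i ≠ 0) (v : ι → ℝ≥0∞) :
    Tendsto (fun s : ℝ≥0∞ => J.piecewise (s⁻¹ • u) v) (𝓝 0) (𝓝 (J.piecewise ⊤ v)) := by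
  refine tendsto_pi_nhds.2 fun i => ?_
  by_cases hi : i ∈ J
  · have hinv : Tendsto (fun s : ℝ≥0∞ => s⁻¹) (𝓝 0) (𝓝 ⊤) := by
      simpa using continuous_inv.tendsto (0 : ℝ≥0∞)
    simpa [hi, ENNReal.top_mul (hu i hi)] using
      ENNReal.Tendsto.mul_const (b := u i) hinv (Or.inl top_ne_zero)
  · simp [hi]

theorem piecewise_smul_eq_smul_piecewise_inv_smul (u v : ι → ℝ≥0∞) {s : ℝ≥0∞} (h0 : s ≠ 0)
    (htop : s ≠ ⊤) : J.piecewise u (s • v) = s • J.piecewise (s⁻¹ • u) v := by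
  ext i
  by_cases hi : i ∈ J
  · simp [hi, ← mul_assoc, ENNReal.mul_inv_cancel h0 htop]
  · simp [hi]

end Piecewise

theorem exists_separating_point_of_lt_of_lt {ι : Type*} [Fintype ι] [DecidableEq ι]
    {f : (ι → ℝ≥0∞) → ι → ℝ≥0∞}
    (hf_hom : ∀ c : ℝ≥0∞, 0 < c → c ≠ ⊤ → ∀ x, f (c • x) = c • f x) (hf_cont : Continuous f)
    (J : Finset ι) {u v : ι → ℝ≥0∞} (hu : ∀ i, 0 < u i ∧ u i ≠ ⊤)
    (hv : ∀ i, 0 < v i ∧ v i ≠ ⊤) {t : ℝ≥0∞}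
    (hut : ⨆ j ∈ J, f (J.piecewise u 0) j / u j < t)
    (htv : t < ⨅ i ∈ Jᶜ, f (J.piecewise ⊤ v) i / v i) :
    ∃ x : ι → ℝ≥0∞, (∀ i, 0 < x i ∧ x i ≠ ⊤) ∧
      (⨆ j ∈ J, f x j / x j) < t ∧ t < ⨅ i ∈ Jᶜ, f x i / x i := by
  have hJ : ∀ᶠ s : ℝ≥0∞ in 𝓝 0, ⨆ j ∈ J, f (J.piecewise u (s • v)) j / u j < t :=
    (((hf_cont.tendsto _).comp
      (tendsto_piecewise_smul_nhds_zero J u fun i _ => (hv i).2)).biSup_div_const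
      J fun i _ => (hu i).1.ne').eventually_lt_const hut
  have hJc : ∀ᶠ s : ℝ≥0∞ in 𝓝 0, t < ⨅ i ∈ Jᶜ, f (J.piecewise (s⁻¹ • u) v) i / v i :=
    (((hf_cont.tendsto _).comp
      (tendsto_piecewise_inv_smul_nhds_zero J (fun i _ => (hu i).1.ne') v)).biInf_div_const
      Jᶜ fun i _ => (hv i).1.ne').eventually_const_lt htv
  obtain ⟨s, ⟨hsJ, hsJc, hs_lt_top⟩, hs_mem⟩ :=
    (((hJ.and (hJc.and (eventually_lt_nhds ENNReal.zero_lt_top))).filter_mono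
      nhdsWithin_le_nhds).and (eventually_mem_nhdsWithin (s := Set.Ioi 0) (a := 0))).exists
  have hs_pos : 0 < s := hs_mem
  have hs0 : s ≠ 0 := hs_pos.ne'
  refine ⟨J.piecewise u (s • v), fun i => ?_, ?_, ?_⟩
  · by_cases hi : i ∈ J
    · simpa [hi] using hu i
    · simpa [hi, ENNReal.mul_pos hs0 (hv i).1.ne'] using ENNReal.mul_ne_top hs_lt_top.ne (hv i).2
  · refine lt_of_eq_of_lt (biSup_congr fun j hj => ?_) hsJ
    rw [Finset.piecewise_eq_of_mem _ _ _ hj]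
  · rw [piecewise_smul_eq_smul_piecewise_inv_smul J u v hs0 hs_lt_top.ne,
      hf_hom s hs_pos hs_lt_top.ne]
    refine hsJc.trans_eq (biInf_congr fun i hi => ?_)
    simp [Finset.piecewise_eq_of_notMem _ _ _ (Finset.mem_compl.1 hi),
      ENNReal.mul_div_mul_left _ _ hs0 hs_lt_top.ne]

theorem exists_separating_point_iff_collatzWielandt_general (n : ℕ)
    (f : (Fin n → ℝ≥0∞) → (Fin n → ℝ≥0∞))
    (hf_mono : Monotone f)
    (hf_hom : ∀ c : ℝ≥0∞, 0 < c → c ≠ ⊤ → ∀ x, f (c • x) = c • f x)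
    (hf_cont : Continuous f)
    (J : Finset (Fin n)) :
    (∃ x : Fin n → ℝ≥0∞, (∀ i, 0 < x i ∧ x i ≠ ⊤) ∧
        (⨆ j ∈ J, f x j / x j) < (⨅ i ∈ Jᶜ, f x i / x i))
    ↔ (⨅ x : {x : Fin n → ℝ≥0∞ // ∀ i, 0 < x i ∧ x i ≠ ⊤},
          ⨆ j ∈ J, f (fun k => if k ∈ J then x.1 k else 0) j / x.1 j)
        < (⨆ x : {x : Fin n → ℝ≥0∞ // ∀ i, 0 < x i ∧ x i ≠ ⊤},
            ⨅ i ∈ Jᶜ, f (fun k => if k ∈ J then ⊤ else x.1 k) i / x.1 i) := by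
  constructor
  · rintro ⟨x, hx, hlt⟩
    calc _ ≤ ⨆ j ∈ J, f x j / x j := iInf_le_of_le ⟨x, hx⟩ <| iSup₂_mono fun j _ =>
          ENNReal.div_le_div_right (hf_mono (J.piecewise_le_of_le_of_le le_rfl zero_le) j) _
      _ < ⨅ i ∈ Jᶜ, f x i / x i := hlt
      _ ≤ _ := le_iSup_of_le ⟨x, hx⟩ <| iInf₂_mono fun i _ =>
          ENNReal.div_le_div_right (hf_mono (J.le_piecewise_of_le_of_le le_top le_rfl) i) _
  · intro h
    obtain ⟨t, hrt, htl⟩ := exists_between h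
    obtain ⟨⟨u, hu⟩, hut⟩ := iInf_lt_iff.1 hrt
    obtain ⟨⟨v, hv⟩, htv⟩ := lt_iSup_iff.1 htl
    obtain ⟨x, hx, hxt, htx⟩ := exists_separating_point_of_lt_of_lt hf_hom hf_cont J hu hv hut htv
    exact ⟨x, hx, hxt.trans htx⟩

/-- Lemma 3.3 of the paper: for an order-preserving homogeneous map `f` of the positive
orthant (with its continuous extension to `[0,∞]^n`, modeled here as a continuous
monotone homogeneous self-map of `[0,∞]^n` preserving the strictly positive finite
vectors), and a nonempty proper subset `J ⊆ [n]`, there is a strictly positive `x` with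
`max_{j∈J} f(x)_j/x_j < min_{i∉J} f(x)_i/x_i` if and only if
`r(f^J_0) < λ(f^{Jᶜ}_∞)`. -/
theorem exists_separating_point_iff_collatzWielandt (n : ℕ)
    (f : (Fin n → ℝ≥0∞) → (Fin n → ℝ≥0∞))
    (hf_mono : Monotone f)
    (hf_hom : ∀ c : ℝ≥0∞, 0 < c → c ≠ ⊤ → ∀ x, f (c • x) = c • f x)
    (hf_cont : Continuous f)
    (hf_pos : ∀ x : Fin n → ℝ≥0∞, (∀ i, 0 < x i ∧ x i ≠ ⊤) →
      ∀ i, 0 < f x i ∧ f x i ≠ ⊤)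
    (J : Finset (Fin n)) (hJ : J.Nonempty) (hJne : J ≠ Finset.univ) :
    (∃ x : Fin n → ℝ≥0∞, (∀ i, 0 < x i ∧ x i ≠ ⊤) ∧
        (⨆ j ∈ J, f x j / x j) < (⨅ i ∈ Jᶜ, f x i / x i))
    ↔ (⨅ x : {x : Fin n → ℝ≥0∞ // ∀ i, 0 < x i ∧ x i ≠ ⊤},
          ⨆ j ∈ J, f (fun k => if k ∈ J then x.1 k else 0) j / x.1 j)
        < (⨆ x : {x : Fin n → ℝ≥0∞ // ∀ i, 0 < x i ∧ x i ≠ ⊤},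
            ⨅ i ∈ Jᶜ, f (fun k => if k ∈ J then ⊤ else x.1 k) i / x.1 i) :=
  exists_separating_point_iff_collatzWielandt_general n f hf_mono hf_hom hf_cont J
end

section
/- Let f: R^n_{>0} → R^n_{>0} be order-preserving and homogeneous. If A ⊆ B ⊆ [n], then r(f^A_0) ≤ r(f^B_0) and λ(f^A_∞) ≥ λ(f^B_∞). -/
open ENNReal

/-! Enlarging `J` raises the truncation `P^J_0 x` and lowers `P^J_∞ x` pointwise, while the
supremum (infimum) over `j ∈ J` only grows (shrinks); monotonicity of `f` does the rest. -/

section Truncation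

variable {ι α : Type*} [DecidableEq ι] [Preorder α] {A B : Finset ι}

lemma ite_mem_le_ite_mem_of_subset (hAB : A ⊆ B) {x : ι → α} {c : α} (hc : ∀ k, c ≤ x k) :
    (fun k => if k ∈ A then x k else c) ≤ fun k => if k ∈ B then x k else c := by
  intro k
  by_cases hkA : k ∈ A
  · simp [hkA, hAB hkA]
  · by_cases hkB : k ∈ B <;> simp [hkA, hkB, hc k]

lemma ite_mem_ge_ite_mem_of_subset (hAB : A ⊆ B) {x : ι → α} {c : α} (hc : ∀ k, x k ≤ c) :
    (fun k => if k ∈ B then x k else c) ≤ fun k => if k ∈ A then x k else c :=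
  ite_mem_le_ite_mem_of_subset (α := αᵒᵈ) hAB hc

end Truncation

theorem collatzWielandt_aux_mono_general (n : ℕ)
    (f : (Fin n → ℝ≥0∞) → (Fin n → ℝ≥0∞))
    (hf_mono : Monotone f)
    (A B : Finset (Fin n)) (hAB : A ⊆ B) :
    (⨅ x : {x : Fin n → ℝ≥0∞ // ∀ i, 0 < x i ∧ x i ≠ ⊤},
        ⨆ j ∈ A, f (fun k => if k ∈ A then x.1 k else 0) j / x.1 j)
      ≤ (⨅ x : {x : Fin n → ℝ≥0∞ // ∀ i, 0 < x i ∧ x i ≠ ⊤},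
          ⨆ j ∈ B, f (fun k => if k ∈ B then x.1 k else 0) j / x.1 j) ∧
    (⨆ x : {x : Fin n → ℝ≥0∞ // ∀ i, 0 < x i ∧ x i ≠ ⊤},
        ⨅ j ∈ A, f (fun k => if k ∈ A then x.1 k else ⊤) j / x.1 j)
      ≥ (⨆ x : {x : Fin n → ℝ≥0∞ // ∀ i, 0 < x i ∧ x i ≠ ⊤},
          ⨅ j ∈ B, f (fun k => if k ∈ B then x.1 k else ⊤) j / x.1 j) := by
  constructor
  · refine iInf_mono fun x => le_trans (biSup_mono fun j (hj : j ∈ A) => hAB hj) ?_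
    exact iSup₂_mono fun j _ => ENNReal.div_le_div_right
      (hf_mono (ite_mem_le_ite_mem_of_subset hAB fun _ => zero_le) j) _
  · refine iSup_mono fun x => le_trans ?_ (biInf_mono fun j (hj : j ∈ A) => hAB hj)
    exact iInf₂_mono fun j _ => ENNReal.div_le_div_right
      (hf_mono (ite_mem_ge_ite_mem_of_subset hAB fun _ => le_top) j) _

/-- Monotonicity of the auxiliary Collatz-Wielandt numbers: if `A ⊆ B ⊆ [n]` then
`r(f^A_0) ≤ r(f^B_0)` and `λ(f^A_∞) ≥ λ(f^B_∞)`, for an order-preserving homogeneous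
map `f` of the positive orthant (modeled with its continuous extension as a continuous
monotone homogeneous self-map of `[0,∞]^n` preserving strictly positive finite
vectors). -/
theorem collatzWielandt_aux_mono (n : ℕ)
    (f : (Fin n → ℝ≥0∞) → (Fin n → ℝ≥0∞))
    (hf_mono : Monotone f)
    (hf_hom : ∀ c : ℝ≥0∞, 0 < c → c ≠ ⊤ → ∀ x, f (c • x) = c • f x)
    (hf_cont : Continuous f)
    (hf_pos : ∀ x : Fin n → ℝ≥0∞, (∀ i, 0 < x i ∧ x i ≠ ⊤) →
      ∀ i, 0 < f x i ∧ f x i ≠ ⊤)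
    (A B : Finset (Fin n)) (hA : A.Nonempty) (hAB : A ⊆ B) :
    (⨅ x : {x : Fin n → ℝ≥0∞ // ∀ i, 0 < x i ∧ x i ≠ ⊤},
        ⨆ j ∈ A, f (fun k => if k ∈ A then x.1 k else 0) j / x.1 j)
      ≤ (⨅ x : {x : Fin n → ℝ≥0∞ // ∀ i, 0 < x i ∧ x i ≠ ⊤},
          ⨆ j ∈ B, f (fun k => if k ∈ B then x.1 k else 0) j / x.1 j) ∧
    (⨆ x : {x : Fin n → ℝ≥0∞ // ∀ i, 0 < x i ∧ x i ≠ ⊤},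
        ⨅ j ∈ A, f (fun k => if k ∈ A then x.1 k else ⊤) j / x.1 j)
      ≥ (⨆ x : {x : Fin n → ℝ≥0∞ // ∀ i, 0 < x i ∧ x i ≠ ⊤},
          ⨅ j ∈ B, f (fun k => if k ∈ B then x.1 k else ⊤) j / x.1 j) :=
  collatzWielandt_aux_mono_general n f hf_mono A B hAB
end

section
/- Let f: R^n_{>0} → R^n_{>0} be order-preserving and homogeneous. If r(f^J_0) > λ(f^{Jc}_∞) for some nonempty proper subset J of [n], then f has no eigenvector with all entries strictly positive. -/
open ENNReal

/-! A positive eigenvector `x` with eigenvalue `μ` is itself a test vector for both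
Collatz–Wielandt quantities. Truncating `x` to `0` off `J` can only lower `f x = μ x`, so
`r(f^J_0) ≤ μ`; raising `x` to `⊤` on `J` can only raise it, so `μ ≤ λ(f^{Jᶜ}_∞)`. -/

section CollatzWielandt

variable {ι : Type*} (s : Finset ι) (g : (ι → ℝ≥0∞) → (ι → ℝ≥0∞))

/- In the paper's notation, `r(f^J_0) = collatzWielandtUpper J (x ↦ f (x on J, 0 elsewhere))`
and `λ(f^{Jᶜ}_∞) = collatzWielandtLower Jᶜ (x ↦ f (⊤ on J, x elsewhere))`. -/
noncomputable def collatzWielandtUpper : ℝ≥0∞ :=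
  ⨅ z : {z : ι → ℝ≥0∞ // ∀ i, 0 < z i ∧ z i ≠ ⊤}, ⨆ j ∈ s, g z.1 j / z.1 j

noncomputable def collatzWielandtLower : ℝ≥0∞ :=
  ⨆ z : {z : ι → ℝ≥0∞ // ∀ i, 0 < z i ∧ z i ≠ ⊤}, ⨅ i ∈ s, g z.1 i / z.1 i

variable {s g} {x : ι → ℝ≥0∞} {μ : ℝ≥0∞}

theorem collatzWielandtUpper_le (hx : ∀ i, 0 < x i ∧ x i ≠ ⊤)
    (hgx : ∀ j ∈ s, g x j ≤ μ * x j) : collatzWielandtUpper s g ≤ μ := by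
  refine iInf_le_of_le ⟨x, hx⟩ (iSup₂_le fun j hj => ?_)
  rw [ENNReal.div_le_iff_le_mul (Or.inl (hx j).1.ne') (Or.inl (hx j).2)]
  exact hgx j hj

theorem le_collatzWielandtLower (hx : ∀ i, 0 < x i ∧ x i ≠ ⊤)
    (hgx : ∀ i ∈ s, μ * x i ≤ g x i) : μ ≤ collatzWielandtLower s g := by
  refine le_iSup_of_le ⟨x, hx⟩ (le_iInf₂ fun i hi => ?_)
  rw [ENNReal.le_div_iff_mul_le (Or.inl (hx i).1.ne') (Or.inl (hx i).2)]
  exact hgx i hi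

end CollatzWielandt

theorem no_positive_eigenvector_of_collatzWielandt_gap_general (n : ℕ)
    (f : (Fin n → ℝ≥0∞) → (Fin n → ℝ≥0∞))
    (hf_mono : Monotone f)
    (J : Finset (Fin n))
    (hgap : (⨅ x : {x : Fin n → ℝ≥0∞ // ∀ i, 0 < x i ∧ x i ≠ ⊤},
          ⨆ j ∈ J, f (fun k => if k ∈ J then x.1 k else 0) j / x.1 j)
        > (⨆ x : {x : Fin n → ℝ≥0∞ // ∀ i, 0 < x i ∧ x i ≠ ⊤},
            ⨅ i ∈ Jᶜ, f (fun k => if k ∈ J then ⊤ else x.1 k) i / x.1 i)) :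
    ¬ ∃ (x : Fin n → ℝ≥0∞) (μ : ℝ≥0∞), (∀ i, 0 < x i ∧ x i ≠ ⊤) ∧
        0 < μ ∧ μ ≠ ⊤ ∧ f x = μ • x := by
  rintro ⟨x, μ, hx, -, -, hfx⟩
  have hfx_apply (i : Fin n) : f x i = μ * x i := congrFun hfx i
  have h_truncate : (fun k => if k ∈ J then x k else 0) ≤ x := fun k => by
    by_cases hk : k ∈ J <;> simp [hk]
  have h_raise : x ≤ fun k => if k ∈ J then ⊤ else x k := fun k => by
    by_cases hk : k ∈ J <;> simp [hk]
  have hr : collatzWielandtUpper J (fun z => f fun k => if k ∈ J then z k else 0) ≤ μ :=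
    collatzWielandtUpper_le hx fun j _ => hfx_apply j ▸ hf_mono h_truncate j
  have hlam : μ ≤ collatzWielandtLower Jᶜ (fun z => f fun k => if k ∈ J then ⊤ else z k) :=
    le_collatzWielandtLower hx fun i _ => hfx_apply i ▸ hf_mono h_raise i
  exact hgap.not_ge (hr.trans hlam)

/-- Theorem 3.5 of the paper: if `r(f^J_0) > λ(f^{Jᶜ}_∞)` for some nonempty proper
subset `J` of `[n]`, then the order-preserving homogeneous map `f` (modeled with its
continuous extension as a continuous monotone homogeneous self-map of `[0,∞]^n`
preserving strictly positive finite vectors) has no strictly positive eigenvector. -/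
theorem no_positive_eigenvector_of_collatzWielandt_gap (n : ℕ)
    (f : (Fin n → ℝ≥0∞) → (Fin n → ℝ≥0∞))
    (hf_mono : Monotone f)
    (hf_hom : ∀ c : ℝ≥0∞, 0 < c → c ≠ ⊤ → ∀ x, f (c • x) = c • f x)
    (hf_cont : Continuous f)
    (hf_pos : ∀ x : Fin n → ℝ≥0∞, (∀ i, 0 < x i ∧ x i ≠ ⊤) →
      ∀ i, 0 < f x i ∧ f x i ≠ ⊤)
    (J : Finset (Fin n)) (hJ : J.Nonempty) (hJne : J ≠ Finset.univ)
    (hgap : (⨅ x : {x : Fin n → ℝ≥0∞ // ∀ i, 0 < x i ∧ x i ≠ ⊤},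
          ⨆ j ∈ J, f (fun k => if k ∈ J then x.1 k else 0) j / x.1 j)
        > (⨆ x : {x : Fin n → ℝ≥0∞ // ∀ i, 0 < x i ∧ x i ≠ ⊤},
            ⨅ i ∈ Jᶜ, f (fun k => if k ∈ J then ⊤ else x.1 k) i / x.1 i)) :
    ¬ ∃ (x : Fin n → ℝ≥0∞) (μ : ℝ≥0∞), (∀ i, 0 < x i ∧ x i ≠ ⊤) ∧
        0 < μ ∧ μ ≠ ⊤ ∧ f x = μ • x :=
  no_positive_eigenvector_of_collatzWielandt_gap_general n f hf_mono J hgap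
end

section
/- Let A be a nonnegative n×n matrix whose directed graph has a unique final class C which is primitive, and suppose ρ(A_C) > ρ(A_{[n]\C}). Then every eigenvalue of A other than ρ(A) has absolute value strictly less than ρ(A). -/
open Matrix

/-- `μ ∈ ℂ` is an eigenvalue of the real matrix `M` (viewed over `ℂ`). -/
def IsEigCx {m : Type*} [Fintype m] [DecidableEq m] (M : Matrix m m ℝ) (μ : ℂ) : Prop :=
  (μ • (1 : Matrix m m ℂ) - M.map (Complex.ofReal ·)).det = 0

/-- The spectral radius of a real square matrix: the supremum of the absolute values of
its complex eigenvalues. -/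
noncomputable def specRad {m : Type*} [Fintype m] [DecidableEq m]
    (M : Matrix m m ℝ) : ℝ :=
  sSup ((fun z : ℂ => ‖z‖) '' {μ : ℂ | IsEigCx M μ})

/-- The principal submatrix of `A` on the index set `C`. -/
def principalSub {n : ℕ} (A : Matrix (Fin n) (Fin n) ℝ) (C : Finset (Fin n)) :
    Matrix {i // i ∈ C} {i // i ∈ C} ℝ :=
  fun i j => A i.1 j.1

/-- `C` is a final class of the directed graph of the nonnegative matrix `A`: a
nonempty strongly connected set of vertices with no arcs leaving it. -/
def IsFinalClass {n : ℕ} (A : Matrix (Fin n) (Fin n) ℝ) (C : Finset (Fin n)) : Prop :=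
  C.Nonempty ∧
  (∀ i ∈ C, ∀ j ∈ C, Relation.ReflTransGen (fun a b => 0 < A a b) i j) ∧
  (∀ i ∈ C, ∀ j, 0 < A i j → j ∈ C)

/-!
Since `C` has no outgoing arcs, `A` is block triangular for the splitting `C ⊔ Cᶜ`, so the
eigenvalues of `A` are those of `A_C` together with those of `A_{Cᶜ}`; by the gap hypothesis
`ρ(A) = ρ(A_C)` and the eigenvalues of `A_{Cᶜ}` lie strictly inside the circle of radius `ρ(A)`.

For the primitive block `P = A_C` we run the Perron–Frobenius argument. If `P x = μ x` with
`|μ| = ρ(P)`, then `y = |x|` satisfies `ρ(P) y ≤ P y`. Were this strict somewhere, the positive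
vector `w = P^m y` would satisfy `(ρ(P) + ε) w ≤ P w`, contradicting the Collatz–Wielandt bound
`s w ≤ P w, w > 0 ⟹ s ≤ ρ(P)`, which follows from Gelfand's formula since `‖P^k‖ ≳ s^k`. Hence
`P y = ρ(P) y`, so `|P^m x| = P^m |x|`; equality in the triangle inequality along a row of the
positive matrix `P^m` forces `x = u • |x|` for a single phase `u`, whence `μ = ρ(P)`.
-/

open Filter Topology

section Eigenvalues

variable {ι : Type*} [Fintype ι] [DecidableEq ι]

theorem isEigCx_iff_mem_spectrum (M : Matrix ι ι ℝ) (μ : ℂ) :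
    IsEigCx M μ ↔ μ ∈ spectrum ℂ (M.map (Complex.ofReal ·)) := by
  rw [spectrum.mem_iff, Matrix.isUnit_iff_isUnit_det, isUnit_iff_ne_zero, not_ne_iff,
    Algebra.algebraMap_eq_smul_one]
  rfl

theorem IsEigCx.exists_mulVec_eq_smul {M : Matrix ι ι ℝ} {μ : ℂ} (h : IsEigCx M μ) :
    ∃ x ≠ 0, M.map (Complex.ofReal ·) *ᵥ x = μ • x := by
  obtain ⟨x, hx0, hx⟩ := Matrix.exists_mulVec_eq_zero_iff.mpr h
  refine ⟨x, hx0, ?_⟩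
  rwa [sub_mulVec, smul_mulVec, one_mulVec, sub_eq_zero, eq_comm] at hx

theorem finite_setOf_isEigCx (M : Matrix ι ι ℝ) : {μ | IsEigCx M μ}.Finite :=
  (Matrix.finite_spectrum _).subset fun μ hμ => (isEigCx_iff_mem_spectrum M μ).mp hμ

theorem norm_le_specRad {M : Matrix ι ι ℝ} {μ : ℂ} (h : IsEigCx M μ) : ‖μ‖ ≤ specRad M :=
  le_csSup ((finite_setOf_isEigCx M).image _).bddAbove ⟨μ, h, rfl⟩

theorem spectralRadius_le_specRad (M : Matrix ι ι ℝ) :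
    spectralRadius ℂ (M.map (Complex.ofReal ·)) ≤ ENNReal.ofReal (specRad M) :=
  iSup₂_le fun μ hμ => by
    rw [← enorm_eq_nnnorm, ← ofReal_norm]
    exact ENNReal.ofReal_le_ofReal (norm_le_specRad ((isEigCx_iff_mem_spectrum M μ).mpr hμ))

attribute [local instance] Matrix.linftyOpNormedRing Matrix.linftyOpNormedAlgebra in
theorem exists_isEigCx_norm_eq_specRad [Nonempty ι] (M : Matrix ι ι ℝ) :
    ∃ μ, IsEigCx M μ ∧ ‖μ‖ = specRad M := by
  have hne : {μ | IsEigCx M μ}.Nonempty :=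
    (spectrum.nonempty _).imp fun μ hμ => (isEigCx_iff_mem_spectrum M μ).mpr hμ
  exact (hne.image _).csSup_mem ((finite_setOf_isEigCx M).image _)

theorem specRad_nonneg [Nonempty ι] (M : Matrix ι ι ℝ) : 0 ≤ specRad M := by
  obtain ⟨μ, -, h⟩ := exists_isEigCx_norm_eq_specRad M
  exact h ▸ norm_nonneg μ

end Eigenvalues

theorem ofReal_le_spectralRadius_of_mul_pow_le_norm_pow {A : Type*} [NormedRing A]
    [NormedAlgebra ℂ A] [CompleteSpace A] (a : A) {c s : ℝ} (hc : 0 < c) (hs : 0 ≤ s)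
    (h : ∀ k : ℕ, c * s ^ k ≤ ‖a ^ k‖) : ENNReal.ofReal s ≤ spectralRadius ℂ a := by
  have hroot : Tendsto (fun k : ℕ => c ^ (1 / k : ℝ)) atTop (𝓝 1) := by
    simpa [Function.comp_def] using ((Real.continuousAt_const_rpow hc.ne').tendsto).comp
      tendsto_one_div_atTop_nhds_zero_nat
  have hlim : Tendsto (fun k : ℕ => ENNReal.ofReal (c ^ (1 / k : ℝ) * s)) atTop
      (𝓝 (ENNReal.ofReal s)) := by
    simpa [Function.comp_def] using (ENNReal.continuous_ofReal.tendsto _).comp (hroot.mul_const s)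
  refine le_of_tendsto_of_tendsto hlim
    (spectrum.pow_norm_pow_one_div_tendsto_nhds_spectralRadius a) ?_
  filter_upwards [eventually_ge_atTop 1] with k hk
  gcongr
  calc c ^ (1 / k : ℝ) * s = (c * s ^ k) ^ (1 / k : ℝ) := by
        rw [Real.mul_rpow hc.le (by positivity), one_div,
          Real.pow_rpow_inv_natCast hs (by omega)]
    _ ≤ ‖a ^ k‖ ^ (1 / k : ℝ) := by gcongr; exact h k

namespace Matrix

variable {m n : Type*} [Fintype n]

theorem mulVec_mono {M : Matrix m n ℝ} (hM : ∀ i j, 0 ≤ M i j) : Monotone (M *ᵥ ·) :=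
  fun _ _ huv i => Finset.sum_le_sum fun j _ => mul_le_mul_of_nonneg_left (huv j) (hM i j)

theorem mulVec_pos_of_pos {M : Matrix m n ℝ} (hM : ∀ i j, 0 < M i j) {v : n → ℝ} (hv0 : 0 ≤ v)
    (hv : v ≠ 0) (i : m) : 0 < (M *ᵥ v) i := by
  obtain ⟨j, hj⟩ := Function.ne_iff.mp hv
  exact Finset.sum_pos' (fun k _ => mul_nonneg (hM i k).le (hv0 k))
    ⟨j, Finset.mem_univ j, mul_pos (hM i j) ((hv0 j).lt_of_ne' hj)⟩

theorem map_ofReal_mulVec (M : Matrix m n ℝ) (v : n → ℝ) (i : m) :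
    (M.map (Complex.ofReal ·) *ᵥ fun j => (v j : ℂ)) i = (M *ᵥ v) i :=
  (RingHom.map_mulVec Complex.ofRealHom M v i).symm

theorem norm_mulVec_le_mulVec_norm {M : Matrix m n ℝ} (hM : ∀ i j, 0 ≤ M i j) (x : n → ℂ)
    (i : m) : ‖(M.map (Complex.ofReal ·) *ᵥ x) i‖ ≤ (M *ᵥ fun j => ‖x j‖) i := by
  refine (norm_sum_le _ _).trans_eq (Finset.sum_congr rfl fun j _ => ?_)
  simp [Complex.norm_real, abs_of_nonneg (hM i j)]

theorem map_ofReal_pow [DecidableEq n] (M : Matrix n n ℝ) (k : ℕ) :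
    M.map (Complex.ofReal ·) ^ k = (M ^ k).map (Complex.ofReal ·) :=
  (Matrix.map_pow M Complex.ofRealHom k).symm

theorem pow_mulVec_eq_pow_smul {R : Type*} [CommSemiring R] [DecidableEq n] {M : Matrix n n R}
    {v : n → R} {a : R} (h : M *ᵥ v = a • v) (k : ℕ) : M ^ k *ᵥ v = a ^ k • v := by
  induction k with
  | zero => simp
  | succ k ih => rw [pow_succ', ← mulVec_mulVec, ih, mulVec_smul, h, smul_smul, pow_succ]

theorem pow_smul_le_pow_mulVec [DecidableEq n] {M : Matrix n n ℝ} (hM : ∀ i j, 0 ≤ M i j)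
    {w : n → ℝ} {s : ℝ} (hs : 0 ≤ s) (h : s • w ≤ M *ᵥ w) (k : ℕ) : s ^ k • w ≤ M ^ k *ᵥ w := by
  induction k with
  | zero => simp
  | succ k ih =>
    calc s ^ (k + 1) • w = s ^ k • s • w := by rw [pow_succ, mul_smul]
      _ ≤ s ^ k • (M *ᵥ w) := smul_le_smul_of_nonneg_left h (pow_nonneg hs k)
      _ = M *ᵥ (s ^ k • w) := (mulVec_smul M _ w).symm
      _ ≤ M *ᵥ (M ^ k *ᵥ w) := mulVec_mono hM ih
      _ = M ^ (k + 1) *ᵥ w := by rw [mulVec_mulVec, pow_succ']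

end Matrix

theorem exists_pos_smul_le {ι : Type*} [Finite ι] {u : ι → ℝ} (hu : ∀ i, 0 < u i)
    (w : ι → ℝ) : ∃ ε > (0 : ℝ), ε • w ≤ u := by
  have hsmall : ∀ᶠ ε in 𝓝[>] (0 : ℝ), ∀ i, ε * w i < u i :=
    nhdsWithin_le_nhds <| eventually_all.2 fun i =>
      (tendsto_id.mul_const (w i)).eventually_lt_const (by simpa using hu i)
  obtain ⟨ε, hεw, hε⟩ := (hsmall.and self_mem_nhdsWithin).exists
  exact ⟨ε, hε, fun i => (hεw i).le⟩

open scoped ComplexOrder in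
theorem Complex.exists_eq_norm_mul_of_norm_sum_eq {ι : Type*} {s : Finset ι} {c : ι → ℝ}
    (hc : ∀ j ∈ s, 0 < c j) {x : ι → ℂ}
    (h : ‖∑ j ∈ s, (c j : ℂ) * x j‖ = ∑ j ∈ s, c j * ‖x j‖) :
    ∃ u : ℂ, ∀ j ∈ s, x j = ‖x j‖ * u := by
  set S := ∑ j ∈ s, (c j : ℂ) * x j
  set u := Complex.exp (S.arg * Complex.I)
  have hu : ‖u⁻¹‖ = 1 := by rw [norm_inv, Complex.norm_exp_ofReal_mul_I, inv_one]
  have hu0 : u ≠ 0 := Complex.exp_ne_zero _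
  -- rotating the sum onto the positive real axis turns the triangle inequality for `S` into
  -- a sum of termwise inequalities `re (u⁻¹ * x j) ≤ ‖x j‖` with equal totals
  have hS : ∑ j ∈ s, c j * (u⁻¹ * x j).re = ∑ j ∈ s, c j * ‖x j‖ := by
    have hrot : u⁻¹ * S = ‖S‖ := by
      rw [inv_mul_eq_iff_eq_mul₀ hu0, mul_comm]
      exact (Complex.norm_mul_exp_arg_mul_I S).symm
    calc ∑ j ∈ s, c j * (u⁻¹ * x j).re = (u⁻¹ * S).re := by
          simp_rw [S, Finset.mul_sum, Complex.re_sum, ← Complex.re_ofReal_mul, mul_left_comm]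
      _ = ∑ j ∈ s, c j * ‖x j‖ := by rw [hrot, Complex.ofReal_re, h]
  have hre : ∀ j ∈ s, (u⁻¹ * x j).re = ‖x j‖ := by
    have hle : ∀ j ∈ s, c j * (u⁻¹ * x j).re ≤ c j * ‖x j‖ := fun j hj =>
      mul_le_mul_of_nonneg_left ((Complex.re_le_norm _).trans (by rw [norm_mul, hu, one_mul]))
        (hc j hj).le
    intro j hj
    exact (mul_right_inj' (hc j hj).ne').mp ((Finset.sum_eq_sum_iff_of_le hle).mp hS j hj)
  refine ⟨u, fun j hj => ?_⟩
  have hnonneg : 0 ≤ u⁻¹ * x j := Complex.re_eq_norm.mp (by rw [hre j hj, norm_mul, hu, one_mul])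
  calc x j = u * (u⁻¹ * x j) := by rw [mul_inv_cancel_left₀ hu0]
    _ = ‖x j‖ * u := by rw [Complex.eq_coe_norm_of_nonneg hnonneg, norm_mul, hu, one_mul, mul_comm]

section NonnegMatrix

variable {ι : Type*} [Fintype ι] [DecidableEq ι]

attribute [local instance] Matrix.linftyOpNormedRing Matrix.linftyOpNormedAlgebra in
theorem le_specRad_of_smul_le_mulVec [Nonempty ι] {Q : Matrix ι ι ℝ} (hQ : ∀ i j, 0 ≤ Q i j)
    {w : ι → ℝ} (hw : ∀ i, 0 < w i) {s : ℝ} (hs : 0 ≤ s) (h : s • w ≤ Q *ᵥ w) :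
    s ≤ specRad Q := by
  obtain ⟨i⟩ := ‹Nonempty ι›
  set v : ι → ℂ := fun j => (w j : ℂ)
  have hv : 0 < ‖v‖ :=
    norm_pos_iff.mpr (Function.ne_iff.mpr ⟨i, Complex.ofReal_ne_zero.mpr (hw i).ne'⟩)
  have hgrowth : ∀ k : ℕ, w i / ‖v‖ * s ^ k ≤ ‖Q.map (Complex.ofReal ·) ^ k‖ := fun k => by
    have hk := Matrix.pow_smul_le_pow_mulVec hQ hs h k i
    rw [div_mul_eq_mul_div, div_le_iff₀ hv]
    calc w i * s ^ k = s ^ k * w i := mul_comm _ _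
      _ ≤ (Q ^ k *ᵥ w) i := hk
      _ = ‖(Q.map (Complex.ofReal ·) ^ k *ᵥ v) i‖ := by
          rw [Matrix.map_ofReal_pow, Matrix.map_ofReal_mulVec, Complex.norm_real,
            Real.norm_of_nonneg ((mul_nonneg (pow_nonneg hs k) (hw i).le).trans hk)]
      _ ≤ ‖Q.map (Complex.ofReal ·) ^ k *ᵥ v‖ := norm_le_pi_norm _ i
      _ ≤ ‖Q.map (Complex.ofReal ·) ^ k‖ * ‖v‖ := Matrix.linfty_opNorm_mulVec _ _
  have hle := (ofReal_le_spectralRadius_of_mul_pow_le_norm_pow _ (div_pos (hw i) hv) hs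
    hgrowth).trans (spectralRadius_le_specRad Q)
  exact (ENNReal.ofReal_le_ofReal_iff (specRad_nonneg Q)).mp hle

theorem mulVec_eq_specRad_smul_of_le [Nonempty ι] {P : Matrix ι ι ℝ} (hP : ∀ i j, 0 ≤ P i j)
    {m : ℕ} (hprim : ∀ i j, 0 < (P ^ m) i j) {y : ι → ℝ} (hy0 : 0 ≤ y) (hy : y ≠ 0)
    (h : specRad P • y ≤ P *ᵥ y) : P *ᵥ y = specRad P • y := by
  by_contra hne
  set r := specRad P
  set z := P *ᵥ y - r • y
  have hz0 : 0 ≤ z := sub_nonneg.mpr h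
  have hw : ∀ i, 0 < (P ^ m *ᵥ y) i := Matrix.mulVec_pos_of_pos hprim hy0 hy
  obtain ⟨ε, hε, hεw⟩ := exists_pos_smul_le
    (Matrix.mulVec_pos_of_pos hprim hz0 (sub_ne_zero.mpr hne)) (P ^ m *ᵥ y)
  -- `w = P ^ m *ᵥ y` is a positive vector on which `P` grows by strictly more than `r`
  have hPw : P *ᵥ (P ^ m *ᵥ y) = r • (P ^ m *ᵥ y) + P ^ m *ᵥ z := by
    rw [mulVec_mulVec, ← pow_succ', pow_succ, ← mulVec_mulVec, mulVec_sub, mulVec_smul,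
      add_sub_cancel]
  have hgrow : (r + ε) • (P ^ m *ᵥ y) ≤ P *ᵥ (P ^ m *ᵥ y) := by
    rw [hPw, add_smul]
    exact add_le_add le_rfl hεw
  linarith [le_specRad_of_smul_le_mulVec hP hw (by linarith [specRad_nonneg P]) hgrow]

theorem eq_specRad_of_norm_eq_specRad [Nonempty ι] {P : Matrix ι ι ℝ} (hP : ∀ i j, 0 ≤ P i j)
    {m : ℕ} (hprim : ∀ i j, 0 < (P ^ m) i j) {μ : ℂ} (hμ : IsEigCx P μ)
    (hμr : ‖μ‖ = specRad P) : μ = specRad P := by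
  obtain ⟨x, hx0, hx⟩ := hμ.exists_mulVec_eq_smul
  set y : ι → ℝ := fun j => ‖x j‖
  have hy : y ≠ 0 := fun h => hx0 (funext fun j => norm_eq_zero.mp (congr_fun h j))
  have hPy : P *ᵥ y = specRad P • y := by
    refine mulVec_eq_specRad_smul_of_le hP hprim (fun j => norm_nonneg _) hy fun i => ?_
    calc specRad P * y i = ‖(P.map (Complex.ofReal ·) *ᵥ x) i‖ := by
          rw [hx, Pi.smul_apply, smul_eq_mul, norm_mul, hμr]
      _ ≤ (P *ᵥ y) i := Matrix.norm_mulVec_le_mulVec_norm hP x i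
  -- equality in the triangle inequality along a row of the positive matrix `P ^ m`
  obtain ⟨i⟩ := ‹Nonempty ι›
  obtain ⟨u, hu⟩ : ∃ u : ℂ, ∀ j ∈ Finset.univ, x j = ‖x j‖ * u := by
    refine Complex.exists_eq_norm_mul_of_norm_sum_eq (fun j _ => hprim i j) ?_
    calc ‖∑ j, (((P ^ m) i j : ℝ) : ℂ) * x j‖
        = ‖(P.map (Complex.ofReal ·) ^ m *ᵥ x) i‖ := by rw [Matrix.map_ofReal_pow]; rfl
      _ = (P ^ m *ᵥ y) i := by
          rw [Matrix.pow_mulVec_eq_pow_smul hx, Matrix.pow_mulVec_eq_pow_smul hPy]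
          simp [hμr, y]
      _ = ∑ j, (P ^ m) i j * ‖x j‖ := rfl
  have hxy : x = u • fun j => (y j : ℂ) := funext fun j => by
    rw [hu j (Finset.mem_univ j), Pi.smul_apply, smul_eq_mul, mul_comm]
  have hxr : P.map (Complex.ofReal ·) *ᵥ x = (specRad P : ℂ) • x := by
    ext j
    rw [hxy, mulVec_smul, Pi.smul_apply, Matrix.map_ofReal_mulVec, hPy]
    simp only [Pi.smul_apply, smul_eq_mul, Complex.ofReal_mul]
    ring
  exact smul_left_injective ℂ hx0 (hx.symm.trans hxr)

end NonnegMatrix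

section FinalClass

variable {n : ℕ} {A : Matrix (Fin n) (Fin n) ℝ} {C : Finset (Fin n)}

theorem IsFinalClass.apply_eq_zero (hA : ∀ i j, 0 ≤ A i j) (hC : IsFinalClass A C) :
    ∀ i ∈ C, ∀ j ∉ C, A i j = 0 :=
  fun i hi j hj => ((hA i j).eq_or_lt.resolve_right fun h => hj (hC.2.2 i hi j h)).symm

theorem isEigCx_iff_principalSub (hC : ∀ i ∈ C, ∀ j ∉ C, A i j = 0) (μ : ℂ) :
    IsEigCx A μ ↔ IsEigCx (principalSub A C) μ ∨ IsEigCx (principalSub A Cᶜ) μ := by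
  have hblock : ∀ i, i ∈ C → ∀ j, j ∉ C → (μ • 1 - A.map (Complex.ofReal ·)) i j = 0 :=
    fun i hi j hj => by simp [one_apply_ne (ne_of_mem_of_not_mem hi hj), hC i hi j hj]
  have hsub : ∀ (p : Fin n → Prop) [DecidablePred p],
      toSquareBlockProp (μ • 1 - A.map (Complex.ofReal ·)) p
        = μ • 1 - (toSquareBlockProp A p).map (Complex.ofReal ·) := fun p _ => by
    ext i j
    simp [toSquareBlockProp, toBlock, one_apply, Subtype.ext_iff]
  unfold IsEigCx
  rw [twoBlockTriangular_det' _ (· ∈ C) hblock,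
    equiv_block_det _ (q := (· ∈ Cᶜ)) fun i => Finset.mem_compl, mul_eq_zero, hsub, hsub]
  convert Iff.rfl <;> rfl

theorem specRad_eq_specRad_principalSub (hC : ∀ i ∈ C, ∀ j ∉ C, A i j = 0)
    (hCne : C.Nonempty) (hle : specRad (principalSub A Cᶜ) ≤ specRad (principalSub A C)) :
    specRad A = specRad (principalSub A C) := by
  have : Nonempty C := hCne.to_subtype
  obtain ⟨μ, hμ, hμr⟩ := exists_isEigCx_norm_eq_specRad (principalSub A C)
  refine IsGreatest.csSup_eq ⟨⟨μ, (isEigCx_iff_principalSub hC μ).mpr (.inl hμ), hμr⟩, ?_⟩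
  rintro _ ⟨ν, hν, rfl⟩
  rcases (isEigCx_iff_principalSub hC ν).mp hν with h | h
  exacts [norm_le_specRad h, (norm_le_specRad h).trans hle]

end FinalClass

theorem nonneg_matrix_primitive_spectral_gap_general (n : ℕ)
    (A : Matrix (Fin n) (Fin n) ℝ) (hA : ∀ i j, 0 ≤ A i j)
    (C : Finset (Fin n)) (hC : IsFinalClass A C)
    (hC_prim : ∃ m : ℕ, 0 < m ∧ ∀ i j, 0 < ((principalSub A C) ^ m) i j)
    (hgap : specRad (principalSub A Cᶜ) < specRad (principalSub A C)) :
    ∀ μ : ℂ, IsEigCx A μ → μ ≠ (specRad A : ℂ) → ‖μ‖ < specRad A := by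
  intro μ hμ hne
  have hclosed := hC.apply_eq_zero hA
  have : Nonempty C := hC.1.to_subtype
  obtain ⟨m, -, hprim⟩ := hC_prim
  rw [specRad_eq_specRad_principalSub hclosed hC.1 hgap.le] at hne ⊢
  rcases (isEigCx_iff_principalSub hclosed μ).mp hμ with h | h
  · exact (norm_le_specRad h).lt_of_ne fun heq =>
      hne (eq_specRad_of_norm_eq_specRad (fun i j => hA _ _) hprim h heq)
  · exact (norm_le_specRad h).trans_lt hgap

/-- If a nonnegative matrix `A` has a unique final class `C` which is primitive
(some power of the principal submatrix `A_C` is entrywise positive), and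
`ρ(A_C) > ρ(A_{Cᶜ})`, then every complex eigenvalue of `A` other than `ρ(A)` has
absolute value strictly less than `ρ(A)`. -/
theorem nonneg_matrix_primitive_spectral_gap (n : ℕ)
    (A : Matrix (Fin n) (Fin n) ℝ) (hA : ∀ i j, 0 ≤ A i j)
    (C : Finset (Fin n)) (hC : IsFinalClass A C)
    (hC_unique : ∀ C' : Finset (Fin n), IsFinalClass A C' → C' = C)
    (hC_prim : ∃ m : ℕ, 0 < m ∧ ∀ i j, 0 < ((principalSub A C) ^ m) i j)
    (hgap : specRad (principalSub A Cᶜ) < specRad (principalSub A C)) :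
    ∀ μ : ℂ, IsEigCx A μ → μ ≠ (specRad A : ℂ) → ‖μ‖ < specRad A :=
  nonneg_matrix_primitive_spectral_gap_general n A hA C hC hC_prim hgap
end
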